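/- arXiv:2601.21509 — 5 statements merged into one kernel-verified Lean document; each statement's English description precedes it below -/
import Mathlib

section
/- Let (W_j)_{j=1}^q be a tangent grading of a polarized Lie algebra (𝔤, Δ). If [W_1, W_j] ⊆ W_{1+j} for all j ∈ {1,…,q−1} and [W_1, W_q] = {0}, then (W_j)_{j=1}^q is a stratification of 𝔤, i.e. [W_1, W_j] = W_{j+1} for all j ≤ q−1. -/
/-- The span of brackets `⁅a,b⁆` with `a ∈ A`, `b ∈ B`. -/
def sbr {L : Type*} [LieRing L] [LieAlgebra ℝ L] (A B : Submodule ℝ L) : Submodule ℝ L :=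
  Submodule.span ℝ {x : L | ∃ a ∈ A, ∃ b ∈ B, x = ⁅a, b⁆}

/-- `Δpow Δ k = Δ^k`, the left-iterated bracket `[Δ,…,Δ]` (`k` factors); `Δ^0 := ⊥`. -/
def Δpow {L : Type*} [LieRing L] [LieAlgebra ℝ L] (Δ : Submodule ℝ L) : ℕ → Submodule ℝ L
  | 0 => ⊥
  | 1 => Δ
  | (k+2) => sbr Δ (Δpow Δ (k+1))

/-- `ΔB Δ j = Δ^{[j]} = Σ_{i=1}^j Δ^i`. -/
def ΔB {L : Type*} [LieRing L] [LieAlgebra ℝ L] (Δ : Submodule ℝ L) (j : ℕ) : Submodule ℝ L :=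
  ⨆ i ∈ Finset.Icc 1 j, Δpow Δ i

/-- Lower central series, indexed so that `lcs L 1 = 𝔤`, `lcs L (j+1) = [𝔤, lcs L j]`. -/
def lcs (L : Type*) [LieRing L] [LieAlgebra ℝ L] : ℕ → Submodule ℝ L
  | 0 => ⊤
  | 1 => ⊤
  | (j+2) => sbr ⊤ (lcs L (j+1))

section Aux

variable {L : Type*} [LieRing L] [LieAlgebra ℝ L]

lemma sbr_le' {A B C : Submodule ℝ L} (h : ∀ a ∈ A, ∀ b ∈ B, ⁅a, b⁆ ∈ C) :
    sbr A B ≤ C := by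
  apply Submodule.span_le.2
  rintro x ⟨a, ha, b, hb, rfl⟩
  exact h a ha b hb

lemma mem_sbr' {A B : Submodule ℝ L} {a b : L} (ha : a ∈ A) (hb : b ∈ B) :
    ⁅a, b⁆ ∈ sbr A B :=
  Submodule.subset_span ⟨a, ha, b, hb, rfl⟩

lemma sbr_mono' {A A' B B' : Submodule ℝ L} (hA : A ≤ A') (hB : B ≤ B') :
    sbr A B ≤ sbr A' B' :=
  sbr_le' fun a ha b hb => mem_sbr' (hA ha) (hB hb)

lemma sbr_bot' (A : Submodule ℝ L) : sbr A (⊥ : Submodule ℝ L) = ⊥ := by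
  refine le_bot_iff.1 (sbr_le' fun a _ b hb => ?_)
  rcases Submodule.mem_bot ℝ |>.1 hb with rfl
  simp

lemma sbr_sup_right' (A B C : Submodule ℝ L) :
    sbr A (B ⊔ C) ≤ sbr A B ⊔ sbr A C := by
  refine sbr_le' fun a ha x hx => ?_
  rcases Submodule.mem_sup.1 hx with ⟨b, hb, c, hc, rfl⟩
  rw [lie_add]
  exact Submodule.add_mem _ (Submodule.mem_sup_left (mem_sbr' ha hb))
    (Submodule.mem_sup_right (mem_sbr' ha hc))

lemma ΔB_zero' (Δ : Submodule ℝ L) : ΔB Δ 0 = ⊥ := by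
  simp [ΔB]

lemma ΔB_succ' (Δ : Submodule ℝ L) (j : ℕ) :
    ΔB Δ (j + 1) = ΔB Δ j ⊔ Δpow Δ (j + 1) := by
  unfold ΔB
  have hIcc : Finset.Icc 1 (j+1) = insert (j+1) (Finset.Icc 1 j) := by
    ext x; simp only [Finset.mem_insert, Finset.mem_Icc]; omega
  rw [← Finset.sup_eq_iSup, ← Finset.sup_eq_iSup, hIcc, Finset.sup_insert, sup_comm]

lemma Δpow_le_ΔB' (Δ : Submodule ℝ L) {i j : ℕ} (h1 : 1 ≤ i) (h2 : i ≤ j) :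
    Δpow Δ i ≤ ΔB Δ j :=
  le_biSup _ (Finset.mem_Icc.2 ⟨h1, h2⟩)

lemma sbr_ΔB_le' (Δ : Submodule ℝ L) (j : ℕ) :
    sbr Δ (ΔB Δ j) ≤ ΔB Δ (j + 1) := by
  induction j with
  | zero => rw [ΔB_zero', sbr_bot']; exact bot_le
  | succ j ih =>
    rw [ΔB_succ' Δ j]
    refine le_trans (sbr_sup_right' _ _ _) (sup_le ?_ ?_)
    · exact le_trans ih (le_trans (le_sup_left) (ΔB_succ' Δ (j+1)).ge)
    · have : sbr Δ (Δpow Δ (j + 1)) = Δpow Δ (j + 2) := rfl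
      rw [this]
      exact Δpow_le_ΔB' Δ (by omega) (le_refl _)

end Aux

/-- if a tangent grading `(W j)_{j=1}^q` of `(𝔤, Δ)` satisfies
`[W 1, W j] ⊆ W (j+1)` for `j ≤ q-1` and `[W 1, W q] = 0`, then it is a stratification:
`[W 1, W j] = W (j+1)` for all `j ≤ q-1`. -/
theorem stmt2 {L : Type*} [LieRing L] [LieAlgebra ℝ L] [FiniteDimensional ℝ L]
    (q : ℕ) (hq : 1 ≤ q) (Δ : Submodule ℝ L)
    (hbg : ΔB Δ q = ⊤)
    (W : ℕ → Submodule ℝ L)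
    (hW0 : ∀ j, j ∉ Finset.Icc 1 q → W j = ⊥)
    (hgrad : ∀ j ∈ Finset.Icc 1 q,
      ΔB Δ j = W j ⊔ ΔB Δ (j-1) ∧ W j ⊓ ΔB Δ (j-1) = ⊥)
    (h1 : ∀ j ∈ Finset.Icc 1 (q-1), sbr (W 1) (W j) ≤ W (j+1))
    (h2 : sbr (W 1) (W q) = ⊥) :
    ∀ j ∈ Finset.Icc 1 (q-1), sbr (W 1) (W j) = W (j+1) := by
  -- First: W 1 = Δ
  have hW1 : W 1 = Δ := by
    have h := (hgrad 1 (Finset.mem_Icc.2 ⟨le_refl 1, hq⟩)).1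
    have hB1 : ΔB Δ 1 = Δ := by
      have : ΔB Δ 1 = ΔB Δ 0 ⊔ Δpow Δ 1 := ΔB_succ' Δ 0
      rw [ΔB_zero', bot_sup_eq] at this
      exact this
    rw [hB1] at h
    simp only [Nat.sub_self, ΔB_zero', sup_bot_eq] at h
    exact h.symm
  intro j hj
  rw [Finset.mem_Icc] at hj
  obtain ⟨hj1, hj2⟩ := hj
  have hjq : j + 1 ≤ q := by omega
  refine le_antisymm (h1 j (Finset.mem_Icc.2 ⟨hj1, hj2⟩)) ?_
  -- hgrad at j+1
  have hg := hgrad (j+1) (Finset.mem_Icc.2 ⟨by omega, hjq⟩)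
  have hgj := hgrad j (Finset.mem_Icc.2 ⟨hj1, by omega⟩)
  -- W (j+1) ≤ ΔB Δ (j+1)
  have hWle : W (j+1) ≤ ΔB Δ (j+1) := by rw [hg.1]; exact le_sup_left
  -- key: ΔB Δ (j+1) ≤ sbr Δ (W j) ⊔ ΔB Δ j
  have key : ΔB Δ (j+1) ≤ sbr Δ (W j) ⊔ ΔB Δ j := by
    rw [ΔB_succ' Δ j]
    refine sup_le le_sup_right ?_
    -- Δpow Δ (j+1) = sbr Δ (Δpow Δ j), since j ≥ 1
    obtain ⟨m, rfl⟩ : ∃ m, j = m + 1 := ⟨j - 1, by omega⟩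
    have hpow : Δpow Δ (m + 2) = sbr Δ (Δpow Δ (m+1)) := rfl
    rw [hpow]
    have hle : Δpow Δ (m+1) ≤ W (m+1) ⊔ ΔB Δ m := by
      have := Δpow_le_ΔB' Δ (i := m+1) (j := m+1) (by omega) le_rfl
      rw [hgj.1] at this
      simpa using this
    calc sbr Δ (Δpow Δ (m+1)) ≤ sbr Δ (W (m+1) ⊔ ΔB Δ m) := sbr_mono' le_rfl hle
      _ ≤ sbr Δ (W (m+1)) ⊔ sbr Δ (ΔB Δ m) := sbr_sup_right' _ _ _
      _ ≤ sbr Δ (W (m+1)) ⊔ ΔB Δ (m+1) := sup_le_sup_left (sbr_ΔB_le' Δ m) _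
  -- now take w ∈ W (j+1)
  intro w hw
  have hw' : w ∈ sbr Δ (W j) ⊔ ΔB Δ j := key (hWle hw)
  rcases Submodule.mem_sup.1 hw' with ⟨x, hx, y, hy, rfl⟩
  have hxW : x ∈ W (j+1) := h1 j (Finset.mem_Icc.2 ⟨hj1, hj2⟩) (hW1 ▸ hx)
  have hyW : y ∈ W (j+1) ⊓ ΔB Δ j := by
    constructor
    · have : (x + y) - x ∈ W (j+1) := Submodule.sub_mem _ hw hxW
      simpa using this
    · exact hy
  have : y = 0 := by
    have h0 := hg.2
    simp only [Nat.add_sub_cancel] at h0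
    rw [h0] at hyW
    exact (Submodule.mem_bot ℝ).1 hyW
  rw [this, add_zero]
  exact hW1 ▸ hx
end

section
/- Let G be a Lie group whose Lie algebra 𝔤 carries a tangent grading (W_i)_{i=1}^s with associated dilations δ_ε. Define for ε ≠ 0 the bracket ⟦x,y⟧^{(ε)} := δ_ε^{-1}[δ_ε x, δ_ε y]. Then (ε, x, y) ↦ ⟦x,y⟧^{(ε)} is polynomial in ε, hence extends to ε = 0, and the extension ⟦·,·⟧^{(0)} satisfies ⟦w,z⟧^{(0)} = ([w,z])_{i+j} for w ∈ W_i, z ∈ W_j, where (·)_k is the projection onto W_k. -/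
/-!
Expanding `x = ∑ πᵢ x`, the rescaled bracket `δ_ε⁻¹ ⁅δ_ε x, δ_ε y⁆` becomes
`∑_{i,j,k} ε^(i+j-k) π_k ⁅π_i x, π_j y⁆`. The filtration `Δ^{[j]}` is compatible with the
bracket, `⁅Δ^{[a]}, Δ^{[b]}⁆ ⊆ Δ^{[a+b]}`, and `π_k` kills `Δ^{[m]}` for `m < k`; so only the
terms with `k ≤ i + j` survive. Hence the expression is polynomial in `ε`, and at `ε = 0`
only the terms with `k = i + j` remain.
-/

open Finset

section LowerFiltration

variable {L : Type*} [LieRing L] [LieAlgebra ℝ L]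

variable (L) in
def lieBilin : L →ₗ[ℝ] L →ₗ[ℝ] L :=
  LinearMap.mk₂ ℝ (fun x y => ⁅x, y⁆) add_lie smul_lie lie_add lie_smul

@[simp]
theorem lieBilin_apply (x y : L) : lieBilin L x y = ⁅x, y⁆ := rfl

variable (Δ : Submodule ℝ L)

/-- Induction on the left-normed bracket, using Jacobi `⁅⁅d, u⁆, y⁆ = ⁅d, ⁅u, y⁆⁆ - ⁅u, ⁅d, y⁆⁆`. -/
theorem lie_mem_Δpow_add {x y : L} :
    ∀ {a b : ℕ}, x ∈ Δpow Δ a → y ∈ Δpow Δ b → ⁅x, y⁆ ∈ Δpow Δ (a + b)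
  | 0, _, hx, _ => by rw [(Submodule.mem_bot ℝ).1 hx, zero_lie]; exact zero_mem _
  | 1, 0, _, hy => by rw [(Submodule.mem_bot ℝ).1 hy, lie_zero]; exact zero_mem _
  | 1, b + 1, hx, hy => by
    rw [show 1 + (b + 1) = b + 2 by omega]
    exact Submodule.subset_span ⟨x, hx, y, hy, rfl⟩
  | k + 2, b, hx, hy => by
    induction hx using Submodule.span_induction with
    | mem v hv =>
      obtain ⟨d, hd, u, hu, rfl⟩ := hv
      rw [lie_lie]
      refine sub_mem ?_ ?_
      · simpa only [show 1 + (k + 1 + b) = k + 2 + b by omega] using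
          lie_mem_Δpow_add (a := 1) hd (lie_mem_Δpow_add hu hy)
      · simpa only [show k + 1 + (1 + b) = k + 2 + b by omega] using
          lie_mem_Δpow_add hu (lie_mem_Δpow_add (a := 1) hd hy)
    | zero => rw [zero_lie]; exact zero_mem _
    | add v w _ _ hv hw => rw [add_lie]; exact add_mem hv hw
    | smul c v _ hv => rw [smul_lie]; exact Submodule.smul_mem _ c hv

theorem lie_mem_ΔB_add {x y : L} {a b : ℕ} (hx : x ∈ ΔB Δ a) (hy : y ∈ ΔB Δ b) :
    ⁅x, y⁆ ∈ ΔB Δ (a + b) := by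
  have hle : Submodule.map₂ (lieBilin L) (ΔB Δ a) (ΔB Δ b) ≤ ΔB Δ (a + b) := by
    simp only [ΔB, Submodule.map₂_iSup_left, Submodule.map₂_iSup_right, iSup_le_iff,
      Submodule.map₂_le, lieBilin_apply]
    intro j hj i hi u hu v hv
    rw [mem_Icc] at hi hj
    exact le_biSup (Δpow Δ) (mem_Icc.2 (by omega)) (lie_mem_Δpow_add Δ hu hv)
  exact hle (Submodule.apply_mem_map₂ _ hx hy)

end LowerFiltration

section Grading

variable {R M : Type*} [Ring R] [AddCommGroup M] [Module R M] {s : ℕ} {F W : ℕ → Submodule R M}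

variable (s F W) in
def SplitsFiltration : Prop :=
  ∀ j ∈ Icc 1 s, F j = W j ⊔ F (j - 1) ∧ W j ⊓ F (j - 1) = ⊥

theorem SplitsFiltration.succ (hgrad : SplitsFiltration s F W) {m : ℕ} (hm : m + 1 ≤ s) :
    F (m + 1) = W (m + 1) ⊔ F m ∧ W (m + 1) ⊓ F m = ⊥ := by
  simpa using hgrad (m + 1) (mem_Icc.2 ⟨by omega, hm⟩)

theorem SplitsFiltration.sum_Icc_mem (hgrad : SplitsFiltration s F W) {v : ℕ → M}
    (hv : ∀ j, v j ∈ W j) : ∀ {m : ℕ}, m ≤ s → ∑ j ∈ Icc 1 m, v j ∈ F m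
  | 0, _ => by rw [Icc_eq_empty (by omega), sum_empty]; exact zero_mem _
  | m + 1, hm => by
    rw [sum_Icc_succ_top (by omega), (hgrad.succ hm).1]
    exact Submodule.mem_sup.2 ⟨_, hv _, _, hgrad.sum_Icc_mem hv (by omega), add_comm _ _⟩

theorem SplitsFiltration.eq_zero_of_sum_Icc_eq_zero (hgrad : SplitsFiltration s F W)
    {v : ℕ → M} (hv : ∀ j, v j ∈ W j) :
    ∀ {m : ℕ}, m ≤ s → ∑ j ∈ Icc 1 m, v j = 0 → ∀ j ∈ Icc 1 m, v j = 0
  | 0, _, _, j, hj => by simp at hj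
  | m + 1, hm, hsum, j, hj => by
    rw [sum_Icc_succ_top (by omega)] at hsum
    have htop : v (m + 1) = 0 := by
      have hmem : v (m + 1) ∈ W (m + 1) ⊓ F m := by
        refine ⟨hv _, ?_⟩
        rw [eq_neg_of_add_eq_zero_right hsum]
        exact neg_mem (hgrad.sum_Icc_mem hv (by omega))
      rwa [(hgrad.succ hm).2, Submodule.mem_bot] at hmem
    rcases eq_or_ne j (m + 1) with rfl | hne
    · exact htop
    · rw [htop, add_zero] at hsum
      exact hgrad.eq_zero_of_sum_Icc_eq_zero hv (by omega) hsum j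
        (by simp only [mem_Icc] at hj ⊢; omega)

theorem SplitsFiltration.proj_eq_zero_of_mem_of_ne (hgrad : SplitsFiltration s F W)
    (hW0 : ∀ j, j ∉ Icc 1 s → W j = ⊥) {π : ℕ → M →ₗ[R] M} (hπmem : ∀ j x, π j x ∈ W j)
    (hπsum : ∀ x, ∑ j ∈ Icc 1 s, π j x = x) {j k : ℕ} (hk : k ∈ Icc 1 s) (hjk : j ≠ k)
    {x : M} (hx : x ∈ W j) : π k x = 0 := by
  by_cases hj : j ∈ Icc 1 s
  · have hv : ∀ l, π l x - (Pi.single j x : ℕ → M) l ∈ W l := by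
      intro l
      rcases eq_or_ne l j with rfl | hne
      · simpa using sub_mem (hπmem l x) hx
      · simpa [Pi.single_apply, hne] using hπmem l x
    have hsum : ∑ l ∈ Icc 1 s, (π l x - (Pi.single j x : ℕ → M) l) = 0 := by
      rw [sum_sub_distrib, hπsum, sum_pi_single' j x, if_pos hj, sub_self]
    simpa [Pi.single_apply, hjk.symm] using hgrad.eq_zero_of_sum_Icc_eq_zero hv le_rfl hsum k hk
  · rw [hW0 j hj, Submodule.mem_bot] at hx
    rw [hx, map_zero]

theorem SplitsFiltration.proj_eq_zero_of_mem_of_lt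
    (hgrad : SplitsFiltration s F W) (hF0 : F 0 = ⊥)
    (hW0 : ∀ j, j ∉ Icc 1 s → W j = ⊥) {π : ℕ → M →ₗ[R] M} (hπmem : ∀ j x, π j x ∈ W j)
    (hπsum : ∀ x, ∑ j ∈ Icc 1 s, π j x = x) {k : ℕ} (hk : k ∈ Icc 1 s) :
    ∀ {m : ℕ}, m < k → ∀ x ∈ F m, π k x = 0
  | 0, _, x, hx => by rw [hF0, Submodule.mem_bot] at hx; rw [hx, map_zero]
  | m + 1, hm, x, hx => by
    rw [(hgrad.succ (by have := (mem_Icc.1 hk).2; omega)).1] at hx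
    obtain ⟨w, hw, f, hf, rfl⟩ := Submodule.mem_sup.1 hx
    rw [map_add, hgrad.proj_eq_zero_of_mem_of_ne hW0 hπmem hπsum hk (by omega) hw,
      hgrad.proj_eq_zero_of_mem_of_lt hF0 hW0 hπmem hπsum hk (by omega) f hf, add_zero]

theorem apply_eq_sum_pow_smul_proj {π : ℕ → M →ₗ[R] M} (hπmem : ∀ j x, π j x ∈ W j)
    (hπsum : ∀ x, ∑ j ∈ Icc 1 s, π j x = x) {D : M →ₗ[R] M} {ε : R}
    (hD : ∀ j ∈ Icc 1 s, ∀ x ∈ W j, D x = ε ^ j • x) (x : M) :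
    D x = ∑ j ∈ Icc 1 s, ε ^ j • π j x := by
  conv_lhs => rw [← hπsum x]
  rw [map_sum]
  exact sum_congr rfl fun j hj => hD j hj _ (hπmem j x)

end Grading

theorem exists_sum_range_pow_smul_eq {R M ι : Type*} [Semiring R] [AddCommMonoid M] [Module R M]
    (t : Finset ι) (e : ι → ℕ) (c : ι → M) :
    ∃ (N : ℕ) (d : ℕ → M), ∀ r : R, ∑ a ∈ t, r ^ e a • c a = ∑ n ∈ range N, r ^ n • d n := by
  refine ⟨t.sup e + 1, fun n => ∑ a ∈ t with e a = n, c a, fun r => ?_⟩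
  have hmaps : ∀ a ∈ t, e a ∈ range (t.sup e + 1) :=
    fun a ha => mem_range.2 (Nat.lt_succ_of_le (le_sup ha))
  calc ∑ a ∈ t, r ^ e a • c a
      = ∑ n ∈ range (t.sup e + 1), ∑ a ∈ t with e a = n, r ^ e a • c a :=
        (sum_fiberwise_of_maps_to hmaps _).symm
    _ = ∑ n ∈ range (t.sup e + 1), r ^ n • ∑ a ∈ t with e a = n, c a := by
        refine sum_congr rfl fun n _ => ?_
        rw [smul_sum]
        exact sum_congr rfl fun a ha => by rw [(mem_filter.1 ha).2]

section RescaledBracket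

variable {L : Type*} [LieRing L] [LieAlgebra ℝ L] {s : ℕ} {Δ : Submodule ℝ L}
  {W : ℕ → Submodule ℝ L} {π : ℕ → L →ₗ[ℝ] L}

theorem proj_lie_eq_zero_of_lt
    (hgrad : SplitsFiltration s (ΔB Δ) W)
    (hW0 : ∀ j, j ∉ Icc 1 s → W j = ⊥) (hπmem : ∀ j x, π j x ∈ W j)
    (hπsum : ∀ x, ∑ j ∈ Icc 1 s, π j x = x) {i j k : ℕ} (hi : i ∈ Icc 1 s) (hj : j ∈ Icc 1 s)
    (hk : k ∈ Icc 1 s) (hlt : i + j < k) {w z : L} (hw : w ∈ W i) (hz : z ∈ W j) :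
    π k ⁅w, z⁆ = 0 := by
  have hW_le : ∀ l ∈ Icc 1 s, W l ≤ ΔB Δ l := fun l hl => (hgrad l hl).1 ▸ le_sup_left
  refine hgrad.proj_eq_zero_of_mem_of_lt (by simp [ΔB]) hW0 hπmem hπsum hk hlt _ ?_
  exact lie_mem_ΔB_add Δ (hW_le i hi hw) (hW_le j hj hz)

variable (s π) in
/-- `⟦x, y⟧^{(ε)}` written out in the grading; the exponent `i + j - k` is truncated, which is
harmless because the terms with `k > i + j` vanish (`proj_lie_eq_zero_of_lt`). -/
noncomputable def rescaledBracket (ε : ℝ) : L →ₗ[ℝ] L →ₗ[ℝ] L :=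
  ∑ p ∈ Icc 1 s ×ˢ Icc 1 s ×ˢ Icc 1 s,
    ε ^ (p.1 + p.2.1 - p.2.2) • ((lieBilin L).compl₁₂ (π p.1) (π p.2.1)).compr₂ (π p.2.2)

theorem rescaledBracket_apply (ε : ℝ) (x y : L) :
    rescaledBracket s π ε x y = ∑ p ∈ Icc 1 s ×ˢ Icc 1 s ×ˢ Icc 1 s,
      ε ^ (p.1 + p.2.1 - p.2.2) • π p.2.2 ⁅π p.1 x, π p.2.1 y⁆ := by
  simp [rescaledBracket]

theorem rescaledBracket_eq_dilation_lie
    (hgrad : SplitsFiltration s (ΔB Δ) W)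
    (hW0 : ∀ j, j ∉ Icc 1 s → W j = ⊥) (hπmem : ∀ j x, π j x ∈ W j)
    (hπsum : ∀ x, ∑ j ∈ Icc 1 s, π j x = x) {δ : ℝ → L →ₗ[ℝ] L}
    (hδ : ∀ ε : ℝ, ∀ j ∈ Icc 1 s, ∀ x ∈ W j, δ ε x = ε ^ j • x) {ε : ℝ} (hε : ε ≠ 0) (x y : L) :
    rescaledBracket s π ε x y = δ (1 / ε) ⁅δ ε x, δ ε y⁆ := by
  rw [rescaledBracket_apply, apply_eq_sum_pow_smul_proj hπmem hπsum (hδ ε) x,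
    apply_eq_sum_pow_smul_proj hπmem hπsum (hδ ε) y, sum_lie_sum, map_sum, sum_product]
  refine sum_congr rfl fun i hi => ?_
  rw [map_sum, sum_product]
  refine sum_congr rfl fun j hj => ?_
  rw [smul_lie, lie_smul, map_smul, map_smul,
    apply_eq_sum_pow_smul_proj hπmem hπsum (hδ (1 / ε)), smul_sum, smul_sum]
  refine sum_congr rfl fun k hk => ?_
  rcases le_or_gt k (i + j) with hle | hlt
  · rw [smul_smul, smul_smul, pow_sub₀ ε hε hle, pow_add, one_div, inv_pow, mul_assoc]
  · simp only [proj_lie_eq_zero_of_lt hgrad hW0 hπmem hπsum hi hj hk hlt (hπmem i x) (hπmem j y),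
      smul_zero]

theorem rescaledBracket_zero_apply
    (hgrad : SplitsFiltration s (ΔB Δ) W)
    (hW0 : ∀ j, j ∉ Icc 1 s → W j = ⊥) (hπmem : ∀ j x, π j x ∈ W j)
    (hπsum : ∀ x, ∑ j ∈ Icc 1 s, π j x = x) (hπid : ∀ j, ∀ x ∈ W j, π j x = x)
    {i j : ℕ} (hi : i ∈ Icc 1 s) (hj : j ∈ Icc 1 s) {w z : L} (hw : w ∈ W i) (hz : z ∈ W j) :
    rescaledBracket s π 0 w z = π (i + j) ⁅w, z⁆ := by
  rw [rescaledBracket_apply, sum_eq_single (i, j, i + j)]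
  · simp [hπid i w hw, hπid j z hz]
  · rintro ⟨i', j', k⟩ hp hne
    dsimp only
    simp only [mem_product] at hp
    obtain ⟨hi', hj', hk⟩ := hp
    rcases eq_or_ne i' i with rfl | hii
    · rcases eq_or_ne j' j with rfl | hjj
      · rw [hπid i' w hw, hπid j' z hz]
        simp only [ne_eq, Prod.mk.injEq, true_and] at hne
        rcases Nat.lt_or_gt_of_ne hne with hlt | hgt
        · rw [zero_pow (by omega), zero_smul]
        · rw [proj_lie_eq_zero_of_lt hgrad hW0 hπmem hπsum hi hj hk hgt hw hz, smul_zero]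
      · rw [hgrad.proj_eq_zero_of_mem_of_ne hW0 hπmem hπsum hj' hjj.symm hz,
          lie_zero, map_zero, smul_zero]
    · rw [hgrad.proj_eq_zero_of_mem_of_ne hW0 hπmem hπsum hi' hii.symm hw,
        zero_lie, map_zero, smul_zero]
  · intro hout
    have hmem := hπmem (i + j) ⁅π i w, π j z⁆
    rw [hW0 (i + j) fun h => hout (mem_product.2 ⟨hi, mem_product.2 ⟨hj, h⟩⟩),
      Submodule.mem_bot] at hmem
    rw [hmem, smul_zero]

end RescaledBracket

theorem stmt8_general {L : Type*} [LieRing L] [LieAlgebra ℝ L]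
    (s : ℕ) (Δ : Submodule ℝ L)
    (W : ℕ → Submodule ℝ L)
    (hW0 : ∀ j, j ∉ Finset.Icc 1 s → W j = ⊥)
    (hgrad : ∀ j ∈ Finset.Icc 1 s,
      ΔB Δ j = W j ⊔ ΔB Δ (j-1) ∧ W j ⊓ ΔB Δ (j-1) = ⊥)
    (δ : ℝ → L →ₗ[ℝ] L)
    (hδ : ∀ (ε : ℝ), ∀ j ∈ Finset.Icc 1 s, ∀ x ∈ W j, δ ε x = ε ^ j • x)
    (π : ℕ → L →ₗ[ℝ] L)
    (hπmem : ∀ j x, π j x ∈ W j)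
    (hπsum : ∀ x : L, (∑ j ∈ Finset.Icc 1 s, π j x) = x)
    (hπid : ∀ j, ∀ x ∈ W j, π j x = x) :
    ∃ B : ℝ → L →ₗ[ℝ] L →ₗ[ℝ] L,
      (∀ ε : ℝ, ε ≠ 0 → ∀ x y : L, B ε x y = δ (1/ε) ⁅δ ε x, δ ε y⁆) ∧
      (∀ x y : L, ∃ (N : ℕ) (c : ℕ → L),
        ∀ ε : ℝ, B ε x y = ∑ i ∈ Finset.range N, ε ^ i • c i) ∧
      (∀ i ∈ Finset.Icc 1 s, ∀ j ∈ Finset.Icc 1 s, ∀ w ∈ W i, ∀ z ∈ W j,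
        B 0 w z = π (i + j) ⁅w, z⁆) := by
  refine ⟨rescaledBracket s π, ?_, ?_, ?_⟩
  · exact fun ε hε => rescaledBracket_eq_dilation_lie hgrad hW0 hπmem hπsum hδ hε
  · intro x y
    simp only [rescaledBracket_apply]
    exact exists_sum_range_pow_smul_eq _ _ _
  · exact fun i hi j hj w hw z hz =>
      rescaledBracket_zero_apply hgrad hW0 hπmem hπsum hπid hi hj hw hz

/-- for a tangent grading `(W i)_{i=1}^s` with dilations `δ ε`, the rescaled
brackets `⟦x,y⟧^{(ε)} = δ_ε⁻¹ ⁅δ_ε x, δ_ε y⁆` (for `ε ≠ 0`) extend polynomially to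
`ε = 0`, and the value at `0` is the graded bracket: `⟦w,z⟧^{(0)} = (⁅w,z⁆)_{i+j}` for
`w ∈ W i`, `z ∈ W j`, where `π k` is the projection onto `W k`. -/
theorem stmt8 {L : Type*} [LieRing L] [LieAlgebra ℝ L] [FiniteDimensional ℝ L]
    (s : ℕ) (hs : 1 ≤ s) (Δ : Submodule ℝ L)
    (W : ℕ → Submodule ℝ L)
    (hW0 : ∀ j, j ∉ Finset.Icc 1 s → W j = ⊥)
    (hgrad : ∀ j ∈ Finset.Icc 1 s,
      ΔB Δ j = W j ⊔ ΔB Δ (j-1) ∧ W j ⊓ ΔB Δ (j-1) = ⊥)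
    (hbg : ΔB Δ s = ⊤)
    (δ : ℝ → L →ₗ[ℝ] L)
    (hδ : ∀ (ε : ℝ), ∀ j ∈ Finset.Icc 1 s, ∀ x ∈ W j, δ ε x = ε ^ j • x)
    (π : ℕ → L →ₗ[ℝ] L)
    (hπmem : ∀ j x, π j x ∈ W j)
    (hπsum : ∀ x : L, (∑ j ∈ Finset.Icc 1 s, π j x) = x)
    (hπid : ∀ j, ∀ x ∈ W j, π j x = x) :
    ∃ B : ℝ → L →ₗ[ℝ] L →ₗ[ℝ] L,
      (∀ ε : ℝ, ε ≠ 0 → ∀ x y : L, B ε x y = δ (1/ε) ⁅δ ε x, δ ε y⁆) ∧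
      (∀ x y : L, ∃ (N : ℕ) (c : ℕ → L),
        ∀ ε : ℝ, B ε x y = ∑ i ∈ Finset.range N, ε ^ i • c i) ∧
      (∀ i ∈ Finset.Icc 1 s, ∀ j ∈ Finset.Icc 1 s, ∀ w ∈ W i, ∀ z ∈ W j,
        B 0 w z = π (i + j) ⁅w, z⁆) :=
  stmt8_general s Δ W hW0 hgrad δ hδ π hπmem hπsum hπid
end

section
/- Let f : X → Y be a submetry between metric spaces, with X boundedly compact (closed bounded sets are compact). Then for every 1-Lipschitz curve γ : [0,T] → Y and every x ∈ f^{-1}(γ(0)), there exists a 1-Lipschitz curve γ̃ : [0,T] → X with γ̃(0) = x and f ∘ γ̃ = γ. -/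
open Filter Metric Set Topology

private lemma stmt13_chain {X Y : Type*} [MetricSpace X] [MetricSpace Y] (f : X → Y)
    (hlift : ∀ (a : X) (b : Y), ∃ a', f a' = b ∧ dist a a' ≤ dist (f a) b)
    (x : X) (b : ℕ → Y) (hb : f x = b 0) :
    ∃ s : ℕ → X, s 0 = x ∧ (∀ k, f (s k) = b k) ∧
      ∀ k, dist (s k) (s (k + 1)) ≤ dist (b k) (b (k + 1)) := by
  set s : ℕ → X := fun k => Nat.rec x (fun k xk => (hlift xk (b (k + 1))).choose) k with hs
  have hstep : ∀ k, s (k + 1) = (hlift (s k) (b (k + 1))).choose := fun k => rfl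
  have hfk : ∀ k, f (s k) = b k := by
    intro k
    induction k with
    | zero => exact hb
    | succ k ih => rw [hstep k]; exact (hlift (s k) (b (k + 1))).choose_spec.1
  refine ⟨s, rfl, hfk, fun k => ?_⟩
  have h2 := (hlift (s k) (b (k + 1))).choose_spec.2
  rw [← hstep k, hfk k] at h2
  exact h2

/-- a submetry `f : X → Y` from a boundedly compact (= proper) metric space
lifts `1`-Lipschitz curves: given a `1`-Lipschitz `γ : [0,T] → Y` and `x` with
`f x = γ 0`, there is a `1`-Lipschitz `γ̃ : [0,T] → X` with `γ̃ 0 = x` and `f ∘ γ̃ = γ`. -/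
theorem stmt13 {X Y : Type*} [MetricSpace X] [MetricSpace Y] [ProperSpace X]
    (f : X → Y)
    (hf : ∀ (x : X) (r : ℝ), 0 ≤ r →
      f '' Metric.closedBall x r = Metric.closedBall (f x) r)
    (T : ℝ) (hT : 0 ≤ T) (γ : ℝ → Y) (hγ : LipschitzOnWith 1 γ (Set.Icc 0 T))
    (x : X) (hx : f x = γ 0) :
    ∃ γ' : ℝ → X, LipschitzOnWith 1 γ' (Set.Icc 0 T) ∧ γ' 0 = x ∧
      ∀ t ∈ Set.Icc 0 T, f (γ' t) = γ t := by
  classical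
  haveI : Nonempty X := ⟨x⟩
  -- `f` is 1-Lipschitz
  have hfl : ∀ a b : X, dist (f a) (f b) ≤ dist a b := by
    intro a b
    have hb : b ∈ closedBall a (dist a b) := by
      simp [Metric.mem_closedBall, dist_comm]
    have h1 : f b ∈ f '' closedBall a (dist a b) := ⟨b, hb, rfl⟩
    rw [hf a _ dist_nonneg] at h1
    simpa [Metric.mem_closedBall, dist_comm] using h1
  have hfc : Continuous f :=
    (LipschitzWith.of_dist_le_mul (K := 1) (by simpa using hfl)).continuous
  -- lifting of points
  have hlift : ∀ (a : X) (b : Y), ∃ a', f a' = b ∧ dist a a' ≤ dist (f a) b := by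
    intro a b
    have hb : b ∈ closedBall (f a) (dist (f a) b) := by
      simp [Metric.mem_closedBall, dist_comm]
    rw [← hf a _ dist_nonneg] at hb
    rcases hb with ⟨a', ha', hfa'⟩
    exact ⟨a', hfa', by simpa [Metric.mem_closedBall, dist_comm] using ha'⟩
  rcases hT.eq_or_lt with hT0 | hT0
  · -- degenerate case T = 0
    refine ⟨fun _ => x, ((LipschitzWith.const x).weaken ?_).lipschitzOnWith, rfl, ?_⟩
    · exact zero_le_one
    · intro t ht
      rw [← hT0, Set.Icc_self, Set.mem_singleton_iff] at ht
      subst ht; exact hx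
  -- main case 0 < T
  set c : ℕ → ℕ → ℝ := fun n k => min (k * T / 2 ^ n) T with hc
  set tp : ℕ → ℕ → ℝ := fun n k => k * T / 2 ^ n with htp
  have hc0 : ∀ n, c n 0 = 0 := by
    intro n; simp [hc, hT]
  have hcmem : ∀ n k, c n k ∈ Icc (0 : ℝ) T := by
    intro n k
    exact ⟨le_min (by positivity) hT, min_le_right _ _⟩
  have htpmono : ∀ n k l, k ≤ l → tp n k ≤ tp n l := by
    intro n k l hkl
    have : (k : ℝ) ≤ l := Nat.cast_le.mpr hkl
    simp only [htp]
    gcongr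
  have hcmono : ∀ n k l, k ≤ l → c n k ≤ c n l := by
    intro n k l hkl
    exact min_le_min (htpmono n k l hkl) le_rfl
  have hstep' : ∀ n k, dist (γ (c n k)) (γ (c n (k + 1))) ≤ c n (k + 1) - c n k := by
    intro n k
    have h := (lipschitzOnWith_iff_dist_le_mul.mp hγ) _ (hcmem n k) _ (hcmem n (k + 1))
    have hd : dist (c n k) (c n (k + 1)) = c n (k + 1) - c n k := by
      rw [Real.dist_eq, abs_sub_comm,
        abs_of_nonneg (sub_nonneg.mpr (hcmono n k (k + 1) (Nat.le_succ k)))]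
    simpa [hd] using h
  have hbase : ∀ n, ∃ s : ℕ → X, s 0 = x ∧ (∀ k, f (s k) = γ (c n k)) ∧
      ∀ k, dist (s k) (s (k + 1)) ≤ dist (γ (c n k)) (γ (c n (k + 1))) := by
    intro n
    exact stmt13_chain f hlift x (fun k => γ (c n k)) (by simpa [hc0 n] using hx)
  choose s hs0 hsf hsd using hbase
  have hchain : ∀ n k l, k ≤ l → dist (s n k) (s n l) ≤ c n l - c n k := by
    intro n k l hkl
    induction l, hkl using Nat.le_induction with
    | base => simp
    | succ l hkl ih =>
      calc dist (s n k) (s n (l + 1)) ≤ dist (s n k) (s n l) + dist (s n l) (s n (l + 1)) :=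
            dist_triangle _ _ _
        _ ≤ (c n l - c n k) + (c n (l + 1) - c n l) :=
            add_le_add ih ((hsd n l).trans (hstep' n l))
        _ = c n (l + 1) - c n k := by ring
  have htp_le : ∀ n k, k ≤ 2 ^ n → tp n k ≤ T := by
    intro n k hk
    have hk' : (k : ℝ) ≤ 2 ^ n := by
      calc (k : ℝ) ≤ ((2 ^ n : ℕ) : ℝ) := Nat.cast_le.mpr hk
        _ = 2 ^ n := by push_cast; ring
    rw [htp]
    rw [div_le_iff₀ (by positivity)]
    nlinarith [pow_pos (by norm_num : (0:ℝ) < 2) n]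
  have hc_eq : ∀ n k, k ≤ 2 ^ n → c n k = tp n k := by
    intro n k hk
    exact min_eq_left (htp_le n k hk)
  have htp_level : ∀ m n k, m ≤ n → tp m k = tp n (k * 2 ^ (n - m)) := by
    intro m n k hmn
    have h2 : (2 : ℝ) ^ (n - m) * 2 ^ m = 2 ^ n := by
      rw [← pow_add, Nat.sub_add_cancel hmn]
    simp only [htp]
    push_cast
    rw [← h2]
    field_simp
    try ring
  have hfloor : ∀ m n k, m ≤ n → ⌊tp m k * 2 ^ n / T⌋₊ = k * 2 ^ (n - m) := by
    intro m n k hmn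
    have h2 : (2 : ℝ) ^ (n - m) * 2 ^ m = 2 ^ n := by
      rw [← pow_add, Nat.sub_add_cancel hmn]
    have h3 : tp m k * 2 ^ n / T = ((k * 2 ^ (n - m) : ℕ) : ℝ) := by
      simp only [htp]
      push_cast
      rw [← h2]
      field_simp
      try ring
    rw [h3, Nat.floor_natCast]
  have hidx : ∀ m n k, m ≤ n → k ≤ 2 ^ m → k * 2 ^ (n - m) ≤ 2 ^ n := by
    intro m n k hmn hk
    calc k * 2 ^ (n - m) ≤ 2 ^ m * 2 ^ (n - m) := Nat.mul_le_mul_right _ hk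
      _ = 2 ^ n := by rw [← pow_add, Nat.add_sub_cancel' hmn]
  -- the approximate lifts as functions on ℝ
  set g : ℕ → ℝ → X := fun n t => s n ⌊t * 2 ^ n / T⌋₊ with hg
  have hgball : ∀ n t, g n t ∈ closedBall x T := by
    intro n t
    have h1 := hchain n 0 ⌊t * 2 ^ n / T⌋₊ (Nat.zero_le _)
    rw [hs0 n, hc0 n, sub_zero] at h1
    have h2 : dist (g n t) x ≤ T := by
      rw [dist_comm]; exact h1.trans (hcmem n _).2
    exact Metric.mem_closedBall.mpr h2
  have hK : IsCompact (Set.univ.pi fun _ : ℝ => closedBall x T) :=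
    isCompact_univ_pi fun _ => isCompact_closedBall x T
  have hle : Filter.map g atTop ≤ 𝓟 (Set.univ.pi fun _ : ℝ => closedBall x T) := by
    refine le_principal_iff.mpr (Filter.mem_map.mpr (Eventually.of_forall ?_))
    intro n
    intro t _
    exact hgball n t
  obtain ⟨p, -, hp⟩ := hK.exists_clusterPt hle
  have key : ∀ C : Set (ℝ → X), IsClosed C → (∀ᶠ n in atTop, g n ∈ C) → p ∈ C := by
    intro C hC hev
    have h1 : ClusterPt p (𝓟 C) := hp.mono (le_principal_iff.mpr (Filter.mem_map.mpr hev))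
    rw [← hC.closure_eq]
    exact mem_closure_iff_clusterPt.mpr h1
  -- values of g at grid points
  have hgval : ∀ m n k, m ≤ n → g n (tp m k) = s n (k * 2 ^ (n - m)) := by
    intro m n k hmn
    simp only [hg]
    rw [hfloor m n k hmn]
  -- p lifts γ at grid points
  have hpf : ∀ m k, k ≤ 2 ^ m → f (p (tp m k)) = γ (tp m k) := by
    intro m k hk
    have hclosed : IsClosed {q : ℝ → X | f (q (tp m k)) = γ (tp m k)} :=
      isClosed_eq (hfc.comp (continuous_apply _)) continuous_const
    refine key _ hclosed ?_
    filter_upwards [eventually_ge_atTop m] with n hn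
    show f (g n (tp m k)) = γ (tp m k)
    rw [hgval m n k hn, hsf n _, hc_eq n _ (hidx m n k hn hk), ← htp_level m n k hn]
  -- p is 1-Lipschitz on grid points (same level)
  have hgrid : ∀ n k l, k ≤ 2 ^ n → l ≤ 2 ^ n →
      dist (s n k) (s n l) ≤ dist (tp n k) (tp n l) := by
    intro n k l hk hl
    rcases le_total k l with h | h
    · have h1 := hchain n k l h
      rw [hc_eq n k hk, hc_eq n l hl] at h1
      rw [Real.dist_eq, abs_sub_comm, abs_of_nonneg (sub_nonneg.mpr (htpmono n k l h))]
      exact h1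
    · have h1 := hchain n l k h
      rw [hc_eq n k hk, hc_eq n l hl] at h1
      rw [Real.dist_eq, abs_of_nonneg (sub_nonneg.mpr (htpmono n l k h)), dist_comm]
      exact h1
  have hpd : ∀ m k l, k ≤ 2 ^ m → l ≤ 2 ^ m →
      dist (p (tp m k)) (p (tp m l)) ≤ dist (tp m k) (tp m l) := by
    intro m k l hk hl
    have hclosed : IsClosed {q : ℝ → X |
        dist (q (tp m k)) (q (tp m l)) ≤ dist (tp m k) (tp m l)} :=
      isClosed_le ((continuous_apply _).dist (continuous_apply _)) continuous_const
    refine key _ hclosed ?_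
    filter_upwards [eventually_ge_atTop m] with n hn
    show dist (g n (tp m k)) (g n (tp m l)) ≤ dist (tp m k) (tp m l)
    rw [hgval m n k hn, hgval m n l hn]
    have h1 := hgrid n _ _ (hidx m n k hn hk) (hidx m n l hn hl)
    rwa [← htp_level m n k hn, ← htp_level m n l hn] at h1
  -- cross-level Lipschitz bound
  have hpd' : ∀ n m k l, k ≤ 2 ^ n → l ≤ 2 ^ m →
      dist (p (tp n k)) (p (tp m l)) ≤ dist (tp n k) (tp m l) := by
    intro n m k l hk hl
    have hn : n ≤ max n m := le_max_left n m
    have hm : m ≤ max n m := le_max_right n m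
    rw [htp_level n (max n m) k hn, htp_level m (max n m) l hm]
    exact hpd (max n m) _ _ (hidx n (max n m) k hn hk) (hidx m (max n m) l hm hl)
  have hp0 : p 0 = x := by
    have hclosed : IsClosed {q : ℝ → X | q 0 = x} :=
      isClosed_eq (continuous_apply _) continuous_const
    refine key _ hclosed (Eventually.of_forall fun n => ?_)
    show g n 0 = x
    simp [hg, hs0 n]
  -- dyadic approximations of a point t
  have hfl_le : ∀ (n : ℕ) (t : ℝ), t ∈ Icc 0 T → ⌊t * 2 ^ n / T⌋₊ ≤ 2 ^ n := by
    intro n t ht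
    have h1 : t * 2 ^ n / T ≤ ((2 ^ n : ℕ) : ℝ) := by
      push_cast
      rw [div_le_iff₀ hT0]
      nlinarith [pow_pos (by norm_num : (0:ℝ) < 2) n, ht.2]
    calc ⌊t * 2 ^ n / T⌋₊ ≤ ⌊((2 ^ n : ℕ) : ℝ)⌋₊ := Nat.floor_mono h1
      _ = 2 ^ n := Nat.floor_natCast _
  have ha_le : ∀ (n : ℕ) (t : ℝ), t ∈ Icc 0 T → tp n ⌊t * 2 ^ n / T⌋₊ ≤ t := by
    intro n t ht
    have h1 : (⌊t * 2 ^ n / T⌋₊ : ℝ) ≤ t * 2 ^ n / T := Nat.floor_le (div_nonneg (mul_nonneg ht.1 (by positivity)) hT)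
    have h2 : (⌊t * 2 ^ n / T⌋₊ : ℝ) * T ≤ t * 2 ^ n := (le_div_iff₀ hT0).mp h1
    simp only [htp]
    rw [div_le_iff₀ (pow_pos (by norm_num : (0:ℝ) < 2) n)]
    linarith
  have ha_ge : ∀ (n : ℕ) (t : ℝ), t ∈ Icc 0 T → t - T / 2 ^ n ≤ tp n ⌊t * 2 ^ n / T⌋₊ := by
    intro n t ht
    have h1 : t * 2 ^ n / T < (⌊t * 2 ^ n / T⌋₊ : ℝ) + 1 := Nat.lt_floor_add_one _
    have h2 : t < ((⌊t * 2 ^ n / T⌋₊ : ℝ) + 1) * T / 2 ^ n := by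
      rw [lt_div_iff₀ (by positivity)]
      calc t * 2 ^ n = (t * 2 ^ n / T) * T := by field_simp
        _ < ((⌊t * 2 ^ n / T⌋₊ : ℝ) + 1) * T := by
            exact mul_lt_mul_of_pos_right h1 hT0
    simp only [htp]
    have h3 : ((⌊t * 2 ^ n / T⌋₊ : ℝ) + 1) * T / 2 ^ n
        = (⌊t * 2 ^ n / T⌋₊ : ℝ) * T / 2 ^ n + T / 2 ^ n := by ring
    rw [h3] at h2
    linarith
  have ha_nonneg : ∀ (n : ℕ) (k : ℕ), 0 ≤ tp n k := by
    intro n k; simp only [htp]; positivity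
  have hhalf : Tendsto (fun n : ℕ => T / 2 ^ n) atTop (𝓝 0) := by
    have h1 := (tendsto_pow_atTop_nhds_zero_of_lt_one
      (by norm_num : (0:ℝ) ≤ 1/2) (by norm_num : (1/2 : ℝ) < 1)).const_mul T
    have h2 : (fun n : ℕ => T * (1/2 : ℝ) ^ n) = fun n : ℕ => T / 2 ^ n := by
      funext n
      rw [div_pow, one_pow, mul_one_div]
    rw [h2, mul_zero] at h1
    exact h1
  have hatend : ∀ t ∈ Icc (0:ℝ) T,
      Tendsto (fun n : ℕ => tp n ⌊t * 2 ^ n / T⌋₊) atTop (𝓝 t) := by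
    intro t ht
    have hlow : Tendsto (fun n : ℕ => t - T / 2 ^ n) atTop (𝓝 t) := by
      have := (tendsto_const_nhds (x := t) (f := atTop (α := ℕ))).sub hhalf
      simpa using this
    exact tendsto_of_tendsto_of_tendsto_of_le_of_le hlow tendsto_const_nhds
      (fun n => ha_ge n t ht) (fun n => ha_le n t ht)
  -- the sequence of dyadic lifted values is Cauchy
  have hdiff : ∀ t ∈ Icc (0:ℝ) T, ∀ (n m N : ℕ), N ≤ n → N ≤ m →
      dist (tp n ⌊t * 2 ^ n / T⌋₊) (tp m ⌊t * 2 ^ m / T⌋₊) ≤ T / 2 ^ N := by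
    intro t ht n m N hNn hNm
    have h1 : T / 2 ^ n ≤ T / 2 ^ N := by
      gcongr
      · norm_num
    have h2 : T / 2 ^ m ≤ T / 2 ^ N := by
      gcongr
      · norm_num
    rw [Real.dist_eq, abs_sub_le_iff]
    constructor
    · linarith [ha_le n t ht, ha_ge m t ht, h2]
    · linarith [ha_le m t ht, ha_ge n t ht, h1]
  have hcauchy : ∀ t ∈ Icc (0:ℝ) T,
      CauchySeq (fun n : ℕ => p (tp n ⌊t * 2 ^ n / T⌋₊)) := by
    intro t ht
    refine cauchySeq_of_le_tendsto_0 (fun N => T / 2 ^ N) (fun n m N hNn hNm => ?_) hhalf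
    calc dist (p (tp n ⌊t * 2 ^ n / T⌋₊)) (p (tp m ⌊t * 2 ^ m / T⌋₊))
        ≤ dist (tp n ⌊t * 2 ^ n / T⌋₊) (tp m ⌊t * 2 ^ m / T⌋₊) :=
          hpd' n m _ _ (hfl_le n t ht) (hfl_le m t ht)
      _ ≤ T / 2 ^ N := hdiff t ht n m N hNn hNm
  set γ' : ℝ → X := fun t => limUnder atTop (fun n : ℕ => p (tp n ⌊t * 2 ^ n / T⌋₊)) with hγ'
  have htendγ' : ∀ t ∈ Icc (0:ℝ) T,
      Tendsto (fun n : ℕ => p (tp n ⌊t * 2 ^ n / T⌋₊)) atTop (𝓝 (γ' t)) := by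
    intro t ht
    exact (hcauchy t ht).tendsto_limUnder
  have hγ'0 : γ' 0 = x := by
    have h1 : (fun n : ℕ => p (tp n ⌊(0:ℝ) * 2 ^ n / T⌋₊)) = fun _ : ℕ => x := by
      funext n
      simp [htp, hp0]
    simp only [hγ']
    rw [h1]
    exact Tendsto.limUnder_eq tendsto_const_nhds
  refine ⟨γ', ?_, hγ'0, ?_⟩
  · refine lipschitzOnWith_iff_dist_le_mul.mpr fun t1 h1 t2 h2 => ?_
    rw [NNReal.coe_one, one_mul]
    refine le_of_tendsto_of_tendsto' ((htendγ' t1 h1).dist (htendγ' t2 h2))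
      ((hatend t1 h1).dist (hatend t2 h2)) (fun n => ?_)
    exact hpd' n n _ _ (hfl_le n t1 h1) (hfl_le n t2 h2)
  · intro t ht
    have hA : Tendsto (fun n : ℕ => f (p (tp n ⌊t * 2 ^ n / T⌋₊))) atTop (𝓝 (f (γ' t))) :=
      (hfc.tendsto _).comp (htendγ' t ht)
    have hB : (fun n : ℕ => f (p (tp n ⌊t * 2 ^ n / T⌋₊)))
        = fun n : ℕ => γ (tp n ⌊t * 2 ^ n / T⌋₊) :=
      funext fun n => hpf n _ (hfl_le n t ht)
    have hC : Tendsto (fun n : ℕ => γ (tp n ⌊t * 2 ^ n / T⌋₊)) atTop (𝓝 (γ t)) := by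
      have hγc : ContinuousWithinAt γ (Icc 0 T) t := hγ.continuousOn t ht
      refine hγc.tendsto.comp ?_
      refine tendsto_nhdsWithin_iff.mpr ⟨hatend t ht, Eventually.of_forall fun n => ?_⟩
      exact ⟨ha_nonneg n _, (ha_le n t ht).trans ht.2⟩
    rw [hB] at hA
    exact tendsto_nhds_unique hA hC
end

section
/- Let (𝔤, Δ, ‖·‖) be a normed polarized nilpotent Lie algebra with asymptotic grading (V_i)_{i=1}^s, and let α_2 := max{ j ∈ ℕ : v − π_1(v) ∈ 𝔤^{(j+1)} for all v ∈ Δ }, where π_1 is the projection onto V_1. Then for every norm ‖·‖_E on 𝔤 there is C > 0 such that ‖u − π_1(u)‖_E ≤ C ε^{α_2} ‖u‖^{(ε)} for all ε ∈ [0,1] and all u ∈ Δ^{(ε)}, where Δ^{(ε)} = δ_ε Δ with ‖v‖^{(ε)} = ε‖δ_ε^{-1}v‖ for ε ≠ 0, and Δ^{(0)} = V_1 with any norm. -/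
theorem norm_dominates {L : Type*} [AddCommGroup L] [Module ℝ L] [FiniteDimensional ℝ L]
    (N q : L → ℝ)
    (hNadd : ∀ x y : L, N (x + y) ≤ N x + N y)
    (hNsmul : ∀ (r : ℝ) (x : L), N (r • x) = |r| * N x)
    (hNdef : ∀ x : L, N x = 0 ↔ x = 0)
    (hqadd : ∀ x y : L, q (x + y) ≤ q x + q y)
    (hqsmul : ∀ (r : ℝ) (x : L), q (r • x) = |r| * q x) :
    ∃ C > (0:ℝ), ∀ x, q x ≤ C * N x := by
  have hq0 : q 0 = 0 := by simpa using hqsmul 0 0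
  have hqneg : ∀ x, q (-x) = q x := fun x => by simpa using hqsmul (-1) x
  have hqnonneg : ∀ x, 0 ≤ q x := fun x => by
    have h := hqadd x (-x)
    rw [add_neg_cancel, hq0, hqneg] at h
    linarith
  have hNnonneg : ∀ x, 0 ≤ N x := fun x => by
    have hN0 : N 0 = 0 := by simpa using hNsmul 0 0
    have hNneg : N (-x) = N x := by simpa using hNsmul (-1) x
    have h := hNadd x (-x)
    rw [add_neg_cancel, hN0, hNneg] at h
    linarith
  letI : NormedAddCommGroup L := AddGroupNorm.toNormedAddCommGroup
    { toFun := N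
      map_zero' := (hNdef 0).mpr rfl
      add_le' := hNadd
      neg' := fun x => by simpa using hNsmul (-1) x
      eq_zero_of_map_eq_zero' := fun x h => (hNdef x).mp h }
  letI : NormedSpace ℝ L := ⟨fun r x => by
    rw [Real.norm_eq_abs]; exact le_of_eq (hNsmul r x)⟩
  have hnorm : ∀ x : L, ‖x‖ = N x := fun x => rfl
  set b := Module.finBasis ℝ L with hb
  set n := Module.finrank ℝ L with hn
  let φ : Fin n → L →L[ℝ] ℝ := fun i => LinearMap.toContinuousLinearMap (b.coord i)
  have hqsum : ∀ (t : Finset (Fin n)) (f : Fin n → L),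
      q (∑ i ∈ t, f i) ≤ ∑ i ∈ t, q (f i) := by
    intro t f
    induction t using Finset.cons_induction with
    | empty => simp [hq0]
    | cons a t ha ih =>
      rw [Finset.sum_cons, Finset.sum_cons]
      exact (hqadd _ _).trans (by linarith)
  set C₀ := ∑ i : Fin n, ‖φ i‖ * q (b i) with hC₀def
  have hC₀ : ∀ x, q x ≤ C₀ * N x := by
    intro x
    conv_lhs => rw [← b.sum_repr x]
    refine (hqsum _ _).trans ?_
    rw [hC₀def, Finset.sum_mul]
    refine Finset.sum_le_sum fun i _ => ?_
    rw [hqsmul]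
    have h1 : |b.repr x i| ≤ ‖φ i‖ * N x := by
      have h2 := (φ i).le_opNorm x
      rw [hnorm] at h2
      simpa [φ, Real.norm_eq_abs] using h2
    calc |b.repr x i| * q (b i) ≤ (‖φ i‖ * N x) * q (b i) :=
          mul_le_mul_of_nonneg_right h1 (hqnonneg _)
      _ = ‖φ i‖ * q (b i) * N x := by ring
  refine ⟨C₀ + 1, ?_, fun x => (hC₀ x).trans ?_⟩
  · have : 0 ≤ C₀ := by
      apply Finset.sum_nonneg
      intro i _
      exact mul_nonneg (norm_nonneg _) (hqnonneg _)
    linarith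
  · nlinarith [hNnonneg x]

/-- with `α₂ = max{ j : v − π₁(v) ∈ 𝔤^{(j+1)} ∀ v ∈ Δ }`, for any auxiliary
norm `‖·‖_E` there is `C > 0` such that `‖u − π₁(u)‖_E ≤ C ε^{α₂} ‖u‖^{(ε)}` for all
`ε ∈ (0,1]` and `u ∈ Δ^{(ε)} = δ_ε Δ`; for `ε = 0` one has `Δ^{(0)} = V 1`, on which
`u − π₁(u) = 0`. -/
theorem stmt18 {L : Type*} [LieRing L] [LieAlgebra ℝ L] [FiniteDimensional ℝ L]
    (s : ℕ) (hs : 1 ≤ s)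
    (hnil : lcs L (s+1) = ⊥) (hstep : lcs L s ≠ ⊥)
    (V : ℕ → Submodule ℝ L)
    (hV0 : ∀ j, j ∉ Finset.Icc 1 s → V j = ⊥)
    (hgrad : ∀ j ∈ Finset.Icc 1 s,
      lcs L j = V j ⊔ lcs L (j+1) ∧ V j ⊓ lcs L (j+1) = ⊥)
    (Δ : Submodule ℝ L)
    (hbg : LieSubalgebra.lieSpan ℝ L (Δ : Set L) = ⊤)
    (δ : ℝ → L →ₗ[ℝ] L)
    (hδ : ∀ (ε : ℝ), ∀ j ∈ Finset.Icc 1 s, ∀ x ∈ V j, δ ε x = ε ^ j • x)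
    (π : ℕ → L →ₗ[ℝ] L)
    (hπmem : ∀ j x, π j x ∈ V j)
    (hπsum : ∀ x : L, (∑ j ∈ Finset.Icc 1 s, π j x) = x)
    (hπid : ∀ j, ∀ x ∈ V j, π j x = x)
    (α₂ : ℕ)
    (hα₂ : ∀ v ∈ Δ, v - π 1 v ∈ lcs L (α₂ + 1))
    (hα₂max : ∀ j : ℕ, (∀ v ∈ Δ, v - π 1 v ∈ lcs L (j + 1)) → j ≤ α₂)
    (N NE : L → ℝ)
    (hNadd : ∀ x y : L, N (x + y) ≤ N x + N y)
    (hNsmul : ∀ (r : ℝ) (x : L), N (r • x) = |r| * N x)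
    (hNdef : ∀ x : L, N x = 0 ↔ x = 0)
    (hNEadd : ∀ x y : L, NE (x + y) ≤ NE x + NE y)
    (hNEsmul : ∀ (r : ℝ) (x : L), NE (r • x) = |r| * NE x)
    (hNEdef : ∀ x : L, NE x = 0 ↔ x = 0) :
    ∃ C > (0:ℝ),
      (∀ ε ∈ Set.Ioc (0:ℝ) 1, ∀ u ∈ Submodule.map (δ ε) Δ,
        NE (u - π 1 u) ≤ C * ε ^ α₂ * (ε * N (δ (1/ε) u))) ∧
      (∀ u ∈ V 1, u - π 1 u = 0) := by
  classical
  -- basic norm facts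
  have hNE0 : NE 0 = 0 := by simpa using hNEsmul 0 0
  have hNEneg : ∀ x, NE (-x) = NE x := fun x => by simpa using hNEsmul (-1) x
  have hNEnonneg : ∀ x, 0 ≤ NE x := fun x => by
    have h := hNEadd x (-x); rw [add_neg_cancel, hNE0, hNEneg] at h; linarith
  have hNnonneg : ∀ x, 0 ≤ N x := fun x => by
    have hN0 : N 0 = 0 := by simpa using hNsmul 0 0
    have hNneg : N (-x) = N x := by simpa using hNsmul (-1) x
    have h := hNadd x (-x); rw [add_neg_cancel, hN0, hNneg] at h; linarith
  -- lcs is ⊥ beyond s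
  have hbot : ∀ k, s + 1 ≤ k → lcs L k = ⊥ := by
    intro k hk
    induction k, hk using Nat.le_induction with
    | base => exact hnil
    | succ k hk ih =>
      obtain ⟨m, rfl⟩ : ∃ m, k = m + 1 := ⟨k - 1, by omega⟩
      show sbr ⊤ (lcs L (m+1)) = ⊥
      rw [ih]
      apply le_bot_iff.mp
      rw [sbr, Submodule.span_le]
      rintro x ⟨a, -, b, hb, rfl⟩
      simp only [Submodule.mem_bot] at hb
      simp [hb]
  have hstep' : ∀ k, 1 ≤ k → lcs L (k+1) ≤ lcs L k := by
    intro k hk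
    by_cases hks : k ≤ s
    · rw [(hgrad k (Finset.mem_Icc.mpr ⟨hk, hks⟩)).1]; exact le_sup_right
    · rw [hbot (k+1) (by omega)]; exact bot_le
  have hanti : ∀ k l, 1 ≤ k → k ≤ l → lcs L l ≤ lcs L k := by
    intro k l hk hkl
    induction l, hkl using Nat.le_induction with
    | base => exact le_rfl
    | succ l hl ih => exact (hstep' l (by omega)).trans ih
  have hVlcs : ∀ i k, 1 ≤ k → k ≤ i → V i ≤ lcs L k := by
    intro i k hk hki
    by_cases his : i ∈ Finset.Icc 1 s
    · refine le_trans ?_ (hanti k i hk hki)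
      rw [(hgrad i his).1]; exact le_sup_left
    · rw [hV0 i his]; exact bot_le
  -- uniqueness of graded decompositions
  have huniq : ∀ (w : ℕ → L), (∀ j, w j ∈ V j) →
      (∑ j ∈ Finset.Icc 1 s, w j) = 0 → ∀ j, w j = 0 := by
    intro w hw hsum0
    have h0 : ∀ j, j ∉ Finset.Icc 1 s → w j = 0 := fun j hj => by
      have := hw j; rw [hV0 j hj] at this; simpa using this
    have main : ∀ k, k ≤ s + 1 → ∀ j < k, w j = 0 := by
      intro k
      induction k with
      | zero => omega
      | succ k ih =>
        intro hk j hj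
        rcases Nat.lt_or_ge j k with h | h
        · exact ih (by omega) j h
        have hjk : j = k := by omega
        subst hjk
        by_cases hkmem : j ∈ Finset.Icc 1 s
        · obtain ⟨hk1, hks⟩ := Finset.mem_Icc.mp hkmem
          have hsub : Finset.Icc j s ⊆ Finset.Icc 1 s := by
            intro x hx; simp only [Finset.mem_Icc] at *; omega
          have e1 : ∑ i ∈ Finset.Icc 1 s, w i = ∑ i ∈ Finset.Icc j s, w i := by
            refine (Finset.sum_subset hsub fun x hx hnx => ?_).symm
            simp only [Finset.mem_Icc] at hx hnx
            exact ih (by omega) x (by omega)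
          have e2 : Finset.Icc j s = insert j (Finset.Icc (j+1) s) := by
            ext x; simp only [Finset.mem_Icc, Finset.mem_insert]; omega
          have e3 : ∑ i ∈ Finset.Icc j s, w i = w j + ∑ i ∈ Finset.Icc (j+1) s, w i := by
            rw [e2, Finset.sum_insert (by simp only [Finset.mem_Icc]; omega)]
          have hrest : ∑ i ∈ Finset.Icc (j+1) s, w i ∈ lcs L (j+1) :=
            Submodule.sum_mem _ fun i hi =>
              hVlcs i (j+1) (by omega) (Finset.mem_Icc.mp hi).1 (hw i)
          have hmem : w j ∈ V j ⊓ lcs L (j+1) := by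
            refine Submodule.mem_inf.mpr ⟨hw j, ?_⟩
            have : w j = -(∑ i ∈ Finset.Icc (j+1) s, w i) := by
              have := hsum0
              rw [e1, e3] at this
              linear_combination (norm := module) this
            rw [this]
            exact neg_mem hrest
          rw [(hgrad j hkmem).2] at hmem
          simpa using hmem
        · exact h0 j hkmem
    intro j
    by_cases hj : j ∈ Finset.Icc 1 s
    · exact main (s+1) le_rfl j (by have := (Finset.mem_Icc.mp hj).2; omega)
    · exact h0 j hj
  -- orthogonality of projections
  have hπorth : ∀ i j, j ≠ i → ∀ x ∈ V i, π j x = 0 := by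
    intro i j hne x hx
    by_cases his : i ∈ Finset.Icc 1 s
    · set w : ℕ → L := fun k => π k x - (if k = i then x else 0) with hwdef
      have hw : ∀ k, w k ∈ V k := by
        intro k
        by_cases h : k = i
        · subst h
          simp only [w, if_pos rfl]
          exact sub_mem (hπmem k x) hx
        · simp only [w, if_neg h, sub_zero]
          exact hπmem k x
      have hsumw : ∑ k ∈ Finset.Icc 1 s, w k = 0 := by
        simp only [w]
        rw [Finset.sum_sub_distrib, hπsum, Finset.sum_ite_eq' (Finset.Icc 1 s) i fun _ => x,
          if_pos his, sub_self]
      have := huniq w hw hsumw j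
      simpa [w, if_neg hne] using this
    · rw [hV0 i his] at hx
      simp only [Submodule.mem_bot] at hx
      simp [hx]
  -- vanishing of low projections on lcs
  have hkey : ∀ k, k ≤ s + 1 → ∀ x ∈ lcs L k, ∀ j, j < k → π j x = 0 := by
    have main : ∀ m, m ≤ s → ∀ x ∈ lcs L (s+1-m), ∀ j, j < s+1-m → π j x = 0 := by
      intro m
      induction m with
      | zero =>
        intro _ x hx j _
        rw [Nat.sub_zero, hnil] at hx
        simp only [Submodule.mem_bot] at hx
        simp [hx]
      | succ m ih =>
        intro hm x hx j hj
        have hk1 : (1:ℕ) ≤ s+1-(m+1) := by omega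
        have hkm : (s+1-(m+1)) + 1 = s + 1 - m := by omega
        rw [(hgrad (s+1-(m+1)) (Finset.mem_Icc.mpr ⟨hk1, by omega⟩)).1] at hx
        obtain ⟨a, ha, b, hb, rfl⟩ := Submodule.mem_sup.mp hx
        rw [map_add, hπorth (s+1-(m+1)) j (by omega) a ha,
          ih (by omega) b (by rw [← hkm]; exact hb) j (by omega), add_zero]
    intro k hk x hx j hj
    by_cases hk0 : 1 ≤ k
    · exact main (s+1-k) (by omega) x (by rw [show s+1-(s+1-k) = k by omega]; exact hx) j
        (by omega)
    · omega
  -- dilation formula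
  have hdil : ∀ (t : ℝ) (x : L), δ t x = ∑ j ∈ Finset.Icc 1 s, t^j • π j x := by
    intro t x
    conv_lhs => rw [← hπsum x]
    rw [map_sum]
    exact Finset.sum_congr rfl fun j hj => hδ t j hj _ (hπmem j x)
  -- choose constants
  have hCex : ∀ j : ℕ, ∃ C > (0:ℝ), ∀ x, NE (π j x) ≤ C * N x := fun j =>
    norm_dominates N (fun x => NE (π j x)) hNadd hNsmul hNdef
      (fun x y => by
        show NE (π j (x+y)) ≤ NE (π j x) + NE (π j y)
        rw [map_add]; exact hNEadd _ _)
      (fun r x => by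
        show NE (π j (r • x)) = |r| * NE (π j x)
        rw [map_smul]; exact hNEsmul r _)
  choose Cf hCfpos hCf using hCex
  have hNEsum : ∀ (t : Finset ℕ) (f : ℕ → L),
      NE (∑ j ∈ t, f j) ≤ ∑ j ∈ t, NE (f j) := by
    intro t f
    induction t using Finset.cons_induction with
    | empty => simp [hNE0]
    | cons a t ha ih =>
      rw [Finset.sum_cons, Finset.sum_cons]
      exact (hNEadd _ _).trans (by linarith)
  refine ⟨1 + ∑ j ∈ Finset.Icc 2 s, Cf j, ?_, ?_, ?_⟩
  · have : 0 ≤ ∑ j ∈ Finset.Icc 2 s, Cf j :=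
      Finset.sum_nonneg fun j _ => (hCfpos j).le
    linarith
  · rintro ε ⟨hε0, hε1⟩ u ⟨v, hv, rfl⟩
    -- vanishing of middle projections of v
    have hπjv0 : ∀ j, 2 ≤ j → j ≤ s → j ≤ α₂ → π j v = 0 := by
      intro j hj2 hjs hjα
      have hmemK : v - π 1 v ∈ lcs L (min (α₂+1) (s+1)) :=
        hanti _ (α₂+1) (by omega) (min_le_left _ _) (hα₂ v hv)
      have h := hkey _ (min_le_right _ _) _ hmemK j (by omega)
      rw [map_sub, hπorth 1 j (by omega) _ (hπmem 1 v), sub_zero] at h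
      exact h
    have hde : δ ε v = ∑ j ∈ Finset.Icc 1 s, ε^j • π j v := hdil ε v
    have hinv : δ (1/ε) (δ ε v) = v := by
      rw [hde, map_sum]
      have h : ∀ j ∈ Finset.Icc 1 s, δ (1/ε) (ε^j • π j v) = π j v := by
        intro j hj
        rw [map_smul, hδ (1/ε) j hj _ (hπmem j v), smul_smul, ← mul_pow,
          mul_one_div_cancel (ne_of_gt hε0), one_pow, one_smul]
      rw [Finset.sum_congr rfl h, hπsum]
    have hπ1u : π 1 (δ ε v) = ε • π 1 v := by
      rw [hde, map_sum, Finset.sum_eq_single 1]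
      · rw [map_smul, hπid 1 _ (hπmem 1 v), pow_one]
      · intro j hj hne
        rw [map_smul, hπorth j 1 (Ne.symm hne) _ (hπmem j v), smul_zero]
      · intro h; exact absurd (Finset.mem_Icc.mpr ⟨le_rfl, hs⟩) h
    have hsplit : δ ε v - π 1 (δ ε v) = ∑ j ∈ Finset.Icc 2 s, ε^j • π j v := by
      rw [hπ1u]
      conv_lhs => rw [hde]
      rw [show Finset.Icc 1 s = insert 1 (Finset.Icc 2 s) from by
          ext x; simp only [Finset.mem_Icc, Finset.mem_insert]; omega,
        Finset.sum_insert (by simp only [Finset.mem_Icc]; omega), pow_one,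
        add_sub_cancel_left]
    rw [hsplit, hinv]
    have hterm : ∀ j ∈ Finset.Icc 2 s,
        NE (ε^j • π j v) ≤ ε^(α₂+1) * (Cf j * N v) := by
      intro j hj
      obtain ⟨hj2, hjs⟩ := Finset.mem_Icc.mp hj
      by_cases hjα : j ≤ α₂
      · rw [hπjv0 j hj2 hjs hjα, smul_zero, hNE0]
        exact mul_nonneg (pow_nonneg hε0.le _)
          (mul_nonneg (hCfpos j).le (hNnonneg v))
      · rw [hNEsmul, abs_pow, abs_of_pos hε0]
        have h1 : ε^j ≤ ε^(α₂+1) := pow_le_pow_of_le_one hε0.le hε1 (by omega)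
        exact mul_le_mul h1 (hCf j v) (hNEnonneg _) (pow_nonneg hε0.le _)
    have hnn : (0:ℝ) ≤ ε^α₂ * (ε * N v) :=
      mul_nonneg (pow_nonneg hε0.le _) (mul_nonneg hε0.le (hNnonneg v))
    calc NE (∑ j ∈ Finset.Icc 2 s, ε^j • π j v)
        ≤ ∑ j ∈ Finset.Icc 2 s, NE (ε^j • π j v) := hNEsum _ _
      _ ≤ ∑ j ∈ Finset.Icc 2 s, ε^(α₂+1) * (Cf j * N v) := Finset.sum_le_sum hterm
      _ = (∑ j ∈ Finset.Icc 2 s, Cf j) * (ε^α₂ * (ε * N v)) := by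
          rw [← Finset.mul_sum, ← Finset.sum_mul, pow_succ]; ring
      _ ≤ (1 + ∑ j ∈ Finset.Icc 2 s, Cf j) * (ε^α₂ * (ε * N v)) :=
          mul_le_mul_of_nonneg_right (by linarith) hnn
      _ = (1 + ∑ j ∈ Finset.Icc 2 s, Cf j) * ε^α₂ * (ε * N v) := by ring
  · intro u hu
    rw [hπid 1 u hu, sub_self]
end

section
/- Let (G, Δ, ‖·‖) be a simply connected nilpotent sub-Finsler Lie group with asymptotic grading (V_i)_{i=1}^s, not a Carnot group (i.e. either (V_i) is not a stratification or Δ ≠ V_1). Let α_∞ := min{α_{(1,∞)}, α_{(2,∞)}} where α_{(1,∞)} = max{ j : [V_{p_1},…,V_{p_k}] ⊆ V_{|p|} ⊕ V_{≥|p|+j} ∀k, ∀p } and α_{(2,∞)} = max{ j : v − π_1(v) ∈ 𝔤^{(j+1)} ∀v ∈ Δ }, and let β := min{ k : there exists a Carnot quotient ideal 𝔦 ⊆ V_1 ⊕ ⋯ ⊕ V_k }. Then α_∞ < β. -/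
/-- Left-iterated bracket of the submodules `A 0, A 1, …, A n`. -/
def itbS {L : Type*} [LieRing L] [LieAlgebra ℝ L] :
    (ℕ → Submodule ℝ L) → ℕ → Submodule ℝ L
  | A, 0 => A 0
  | A, n + 1 => sbr (A 0) (itbS (fun i => A (i + 1)) n)

/-- A Carnot quotient ideal of `(𝔤, Δ)` with respect to the grading `(V i)_{i=1}^s`:
an ideal `𝔦` such that `𝔤/𝔦` is stratified by the images of the `V j` and
`Δ ⊆ V 1 + 𝔦`. -/
def IsCQI {L : Type*} [LieRing L] [LieAlgebra ℝ L] (s : ℕ)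
    (V : ℕ → Submodule ℝ L) (Δ 𝔦 : Submodule ℝ L) : Prop :=
  (∀ x : L, ∀ y ∈ 𝔦, ⁅x, y⁆ ∈ 𝔦) ∧
  (∀ j ∈ Finset.Icc 1 (s-1), sbr (V 1) (V j) ⊔ 𝔦 = V (j+1) ⊔ 𝔦) ∧
  sbr (V 1) (V s) ≤ 𝔦 ∧
  Δ ≤ V 1 ⊔ 𝔦

/-- The defining property of `α_{(1,∞)}`:
`[V_{p_1},…,V_{p_k}] ⊆ V_{|p|} ⊕ V_{≥ |p|+j}` for every `k` and every `p ∈ ℕ^k`. -/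
def P1 {L : Type*} [LieRing L] [LieAlgebra ℝ L] (s : ℕ)
    (V : ℕ → Submodule ℝ L) (j : ℕ) : Prop :=
  ∀ (n : ℕ) (q : ℕ → ℕ),
    itbS (fun i => V (q i)) n ≤
      V (∑ i ∈ Finset.range (n+1), q i) ⊔
        ⨆ k ∈ Finset.Icc ((∑ i ∈ Finset.range (n+1), q i) + j) s, V k

/-- for a simply connected nilpotent sub-Finsler Lie group which is not
Carnot (no Carnot quotient ideal `{0}`), with `α_∞ = min(α_{(1,∞)}, α_{(2,∞)})` and
`β` the least `k` admitting a Carnot quotient ideal inside `V 1 ⊕ ⋯ ⊕ V k`, one has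
`α_∞ < β`. -/
theorem stmt19 {L : Type*} [LieRing L] [LieAlgebra ℝ L] [FiniteDimensional ℝ L]
    (s : ℕ) (hs : 1 ≤ s)
    (hnil : lcs L (s+1) = ⊥) (hstep : lcs L s ≠ ⊥)
    (V : ℕ → Submodule ℝ L)
    (hV0 : ∀ j, j ∉ Finset.Icc 1 s → V j = ⊥)
    (hgrad : ∀ j ∈ Finset.Icc 1 s,
      lcs L j = V j ⊔ lcs L (j+1) ∧ V j ⊓ lcs L (j+1) = ⊥)
    (Δ : Submodule ℝ L)
    (hbg : LieSubalgebra.lieSpan ℝ L (Δ : Set L) = ⊤)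
    (π : ℕ → L →ₗ[ℝ] L)
    (hπmem : ∀ j x, π j x ∈ V j)
    (hπsum : ∀ x : L, (∑ j ∈ Finset.Icc 1 s, π j x) = x)
    (hπid : ∀ j, ∀ x ∈ V j, π j x = x)
    -- not a Carnot group
    (hnotCarnot : ¬ IsCQI s V Δ (⊥ : Submodule ℝ L))
    -- `α₁ = α_{(1,∞)}` is the greatest `j` with property `P1`
    (α₁ : ℕ) (hα₁ : P1 s V α₁) (hα₁max : ∀ j, P1 s V j → j ≤ α₁)
    -- `α₂ = α_{(2,∞)}` is the greatest `j` with `v - π₁ v ∈ 𝔤^{(j+1)}` for all `v ∈ Δ`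
    (α₂ : ℕ) (hα₂ : ∀ v ∈ Δ, v - π 1 v ∈ lcs L (α₂ + 1))
    (hα₂max : ∀ j : ℕ, (∀ v ∈ Δ, v - π 1 v ∈ lcs L (j + 1)) → j ≤ α₂)
    (αInf : ℕ) (hαInf : αInf = min α₁ α₂)
    -- `β` is the least `k` admitting a Carnot quotient ideal inside `V_{≤ k}`
    (β : ℕ)
    (hβ : ∃ 𝔦 : Submodule ℝ L, IsCQI s V Δ 𝔦 ∧ 𝔦 ≤ ⨆ k ∈ Finset.Icc 1 β, V k)
    (hβmin : ∀ m : ℕ,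
      (∃ 𝔦 : Submodule ℝ L, IsCQI s V Δ 𝔦 ∧ 𝔦 ≤ ⨆ k ∈ Finset.Icc 1 m, V k) → β ≤ m) :
    αInf < β := by
  by_contra hlt
  push_neg at hlt
  rw [hαInf] at hlt
  have hβα₁ : β ≤ α₁ := le_trans hlt (min_le_left _ _)
  have hβα₂ : β ≤ α₂ := le_trans hlt (min_le_right _ _)
  obtain ⟨𝔦, h𝔦, h𝔦le⟩ := hβ
  -- β ≥ 1
  have hβ1 : 1 ≤ β := by
    by_contra hb
    have hb0 : β = 0 := by omega
    subst hb0
    have : 𝔦 = ⊥ := by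
      rw [le_bot_iff.symm] at *
      refine le_trans h𝔦le ?_
      simp [Finset.Icc_eq_empty_of_lt]
    rw [this] at h𝔦
    exact hnotCarnot h𝔦
  have hα₁1 : 1 ≤ α₁ := le_trans hβ1 hβα₁
  -- basic bracket-span lemmas
  have mem_sbr : ∀ (A B : Submodule ℝ L) (a : L), a ∈ A → ∀ b ∈ B, ⁅a, b⁆ ∈ sbr A B := by
    intro A B a ha b hb
    exact Submodule.subset_span ⟨a, ha, b, hb, rfl⟩
  have sbr_le : ∀ (A B : Submodule ℝ L) (C : Submodule ℝ L),
      (∀ a ∈ A, ∀ b ∈ B, ⁅a, b⁆ ∈ C) → sbr A B ≤ C := by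
    intro A B C h
    refine Submodule.span_le.2 ?_
    rintro x ⟨a, ha, b, hb, rfl⟩
    exact h a ha b hb
  have sbr_bot : ∀ A : Submodule ℝ L, sbr A (⊥ : Submodule ℝ L) = ⊥ := by
    intro A
    refine le_bot_iff.1 (sbr_le _ _ _ ?_)
    intro a _ b hb
    rw [Submodule.mem_bot] at hb ⊢
    rw [hb, lie_zero]
  have lcs_succ : ∀ m : ℕ, 1 ≤ m → lcs L (m + 1) = sbr ⊤ (lcs L m) := by
    intro m hm
    rcases m with _ | k
    · omega
    · rfl
  have lcs_bot : ∀ m : ℕ, s + 1 ≤ m → lcs L m = ⊥ := by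
    intro m hm
    induction m with
    | zero => omega
    | succ n ih =>
      rcases Nat.lt_or_ge n (s+1) with h | h
      · have : n = s := by omega
        rw [← this] at hnil
        exact hnil
      · rw [lcs_succ n (by omega), ih h, sbr_bot]
  -- lcs as sup of V's
  have L8 : ∀ m : ℕ, 1 ≤ m → lcs L m = ⨆ k ∈ Finset.Icc m s, V k := by
    have key : ∀ d m, 1 ≤ m → s + 1 - m = d → lcs L m = ⨆ k ∈ Finset.Icc m s, V k := by
      intro d
      induction d with
      | zero =>
        intro m h1 hd
        rw [lcs_bot m (by omega), Finset.Icc_eq_empty (by omega)]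
        simp
      | succ d ih =>
        intro m h1 hd
        have hms : m ≤ s := by omega
        rw [(hgrad m (Finset.mem_Icc.2 ⟨h1, hms⟩)).1, ih (m+1) (by omega) (by omega),
          show Finset.Icc m s = insert m (Finset.Icc (m+1) s) by
            rw [Finset.Icc_add_one_left_eq_Ioc, Finset.Ioc_insert_left hms],
          Finset.iSup_insert]
    intro m hm
    exact key (s + 1 - m) m hm rfl
  have hVlcs : ∀ m, 1 ≤ m → ∀ k, m ≤ k → V k ≤ lcs L m := by
    intro m hm k hk
    rw [L8 m hm]
    by_cases hks : k ≤ s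
    · exact le_iSup₂ (f := fun k (_ : k ∈ Finset.Icc m s) => V k) k (Finset.mem_Icc.2 ⟨hk, hks⟩)
    · rw [hV0 k (by simp only [Finset.mem_Icc]; omega)]
      exact bot_le
  -- uniqueness of graded components
  have huniq : ∀ d m, 1 ≤ m → s + 1 - m = d → ∀ v : ℕ → L, (∀ j, v j ∈ V j) →
      (∑ j ∈ Finset.Icc m s, v j) = 0 → ∀ j ∈ Finset.Icc m s, v j = 0 := by
    intro d
    induction d with
    | zero =>
      intro m h1 hd v hv hsum j hj
      rw [Finset.mem_Icc] at hj
      omega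
    | succ d ih =>
      intro m h1 hd v hv hsum
      have hms : m ≤ s := by omega
      have hmm : m ∈ Finset.Icc m s := Finset.mem_Icc.2 ⟨le_refl m, hms⟩
      rw [← Finset.add_sum_erase _ v hmm,
        show (Finset.Icc m s).erase m = Finset.Icc (m+1) s by
          rw [Finset.Icc_erase_left, Finset.Icc_add_one_left_eq_Ioc]] at hsum
      have htail : (∑ j ∈ Finset.Icc (m+1) s, v j) ∈ lcs L (m+1) := by
        refine Submodule.sum_mem _ ?_
        intro j hj
        exact hVlcs (m+1) (by omega) j (Finset.mem_Icc.1 hj).1 (hv j)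
      have hvm0 : v m = 0 := by
        have h1' : v m = -(∑ j ∈ Finset.Icc (m+1) s, v j) := by
          rw [eq_neg_iff_add_eq_zero]
          exact hsum
        have : v m ∈ V m ⊓ lcs L (m+1) := by
          refine ⟨hv m, ?_⟩
          rw [h1']
          exact neg_mem htail
        rw [(hgrad m (Finset.mem_Icc.2 ⟨h1, hms⟩)).2] at this
        exact (Submodule.mem_bot ℝ).1 this
      have hsum' : (∑ j ∈ Finset.Icc (m+1) s, v j) = 0 := by
        rw [hvm0, zero_add] at hsum
        exact hsum
      intro j hj
      rw [Finset.mem_Icc] at hj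
      rcases Nat.eq_or_lt_of_le hj.1 with h | h
      · rw [← h]; exact hvm0
      · exact ih (m+1) (by omega) (by omega) v hv hsum' j (Finset.mem_Icc.2 ⟨h, hj.2⟩)
  -- projections kill other components
  have hπV : ∀ j k, j ≠ k → ∀ x ∈ V k, π j x = 0 := by
    intro j k hjk x hx
    by_cases hjs : j ∈ Finset.Icc 1 s
    · by_cases hks : k ∈ Finset.Icc 1 s
      · set w : ℕ → L := fun i => π i x - if i = k then x else 0 with hw
        have hmem : ∀ i, w i ∈ V i := by
          intro i
          by_cases hik : i = k
          · subst hik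
            simp only [hw, if_pos rfl]
            exact sub_mem (hπmem i x) hx
          · simp only [hw, if_neg hik, sub_zero]
            exact hπmem i x
        have hsum0 : ∑ i ∈ Finset.Icc 1 s, w i = 0 := by
          simp only [hw]
          rw [Finset.sum_sub_distrib, hπsum, Finset.sum_ite_eq' (Finset.Icc 1 s) k (fun _ => x),
            if_pos hks, sub_self]
        have := huniq (s + 1 - 1) 1 le_rfl rfl w hmem hsum0 j hjs
        simpa [hw, if_neg hjk] using this
      · rw [hV0 k hks, Submodule.mem_bot] at hx
        rw [hx, map_zero]
    · have := hπmem j x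
      rw [hV0 j hjs, Submodule.mem_bot] at this
      exact this
  have hker : ∀ (t : Finset ℕ) (j : ℕ), j ∉ t → (⨆ k ∈ t, V k) ≤ LinearMap.ker (π j) := by
    intro t j hj
    refine iSup₂_le fun k hk => ?_
    intro x hx
    exact LinearMap.mem_ker.2 (hπV j k (fun h => hj (h ▸ hk)) x hx)
  have hπlcs : ∀ (j m : ℕ), 1 ≤ m → j < m → ∀ x ∈ lcs L m, π j x = 0 := by
    intro j m hm hjm x hx
    rw [L8 m hm] at hx
    exact LinearMap.mem_ker.1 (hker (Finset.Icc m s) j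
      (by simp only [Finset.mem_Icc]; omega) hx)
  have hπhigh : ∀ (j t : ℕ), j < t → ∀ x ∈ (⨆ k ∈ Finset.Icc t s, V k), π j x = 0 := by
    intro j t hjt x hx
    exact LinearMap.mem_ker.1 (hker (Finset.Icc t s) j
      (by simp only [Finset.mem_Icc]; omega) hx)
  -- reconstruction
  have recon : ∀ (x : L) (t : ℕ), (∀ j, j ≠ t → π j x = 0) → x = π t x := by
    intro x t h
    conv_lhs => rw [← hπsum x]
    refine Finset.sum_eq_single t (fun j _ hj => h j hj) ?_
    intro ht
    have := hπmem t x
    rw [hV0 t ht, Submodule.mem_bot] at this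
    exact this
  -- Step A : Δ ≤ V 1
  have hUβ : 𝔦 ≤ ⨆ k ∈ Finset.Icc 1 β, V k := h𝔦le
  have hΔV1 : Δ ≤ V 1 := by
    intro v hv
    have hv1 : v ∈ V 1 ⊔ 𝔦 := h𝔦.2.2.2 hv
    have hvU : v ∈ ⨆ k ∈ Finset.Icc 1 β, V k := by
      refine (sup_le ?_ hUβ : V 1 ⊔ 𝔦 ≤ _) hv1
      exact le_iSup₂ (f := fun k (_ : k ∈ Finset.Icc 1 β) => V k) 1 (Finset.mem_Icc.2 ⟨le_refl 1, hβ1⟩)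
    have hzero : ∀ j, j ≠ 1 → π j v = 0 := by
      intro j hj
      rcases Nat.lt_or_ge β j with h | h
      · exact LinearMap.mem_ker.1 (hker _ j (by simp only [Finset.mem_Icc]; omega) hvU)
      · have h2 : π j (v - π 1 v) = 0 :=
          hπlcs j (α₂ + 1) (by omega) (by omega) _ (hα₂ v hv)
        have h3 : π j (π 1 v) = 0 := hπV j 1 hj _ (hπmem 1 v)
        have h4 := map_sub (π j) v (π 1 v)
        rw [h2, h3, sub_zero] at h4
        exact h4.symm
    have := recon v 1 hzero
    rw [this]
    exact hπmem 1 v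
  -- Δpow / itbS relation
  have hDit : ∀ n : ℕ, Δpow (V 1) (n + 1) = itbS (fun _ => V 1) n := by
    intro n
    induction n with
    | zero => rfl
    | succ n ih =>
      show sbr (V 1) (Δpow (V 1) (n + 1)) = _
      rw [ih]
      rfl
  have hDpow_le : ∀ n : ℕ,
      Δpow (V 1) (n + 1) ≤ V (n + 1) ⊔ ⨆ k ∈ Finset.Icc (n + 1 + α₁) s, V k := by
    intro n
    have h := hα₁ n (fun _ => 1)
    rw [← hDit n] at h
    simpa using h
  have hDbot : ∀ n : ℕ, s < n → Δpow (V 1) n = ⊥ := by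
    intro n hn
    rcases n with _ | m
    · omega
    · refine le_bot_iff.1 (le_trans (hDpow_le m) ?_)
      rw [hV0 (m + 1) (by simp only [Finset.mem_Icc]; omega),
        Finset.Icc_eq_empty (by omega)]
      simp
  -- the P1 bound for sbr (V 1) (V j)
  have hB1 : ∀ j : ℕ,
      sbr (V 1) (V j) ≤ V (1 + j) ⊔ ⨆ k ∈ Finset.Icc (1 + j + α₁) s, V k := by
    intro j
    have h := hα₁ 1 (fun i => if i = 0 then 1 else j)
    simpa [itbS, Finset.sum_range_succ] using h
  -- Step B : sbr (V 1) (V j) ≤ V (j+1), for 1 ≤ j ≤ s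
  have hBs : sbr (V 1) (V s) ≤ (⊥ : Submodule ℝ L) := by
    refine le_trans (hB1 s) ?_
    rw [hV0 (1 + s) (by simp only [Finset.mem_Icc]; omega),
      Finset.Icc_eq_empty (by omega)]
    simp
  have hBle : ∀ j : ℕ, 1 ≤ j → j ≤ s - 1 → sbr (V 1) (V j) ≤ V (j + 1) := by
    intro j h1j hjs
    intro b hb
    have hbP : b ∈ V (1 + j) ⊔ ⨆ k ∈ Finset.Icc (1 + j + α₁) s, V k := hB1 j hb
    have hbI : b ∈ V (j + 1) ⊔ 𝔦 := by
      rw [← h𝔦.2.1 j (Finset.mem_Icc.2 ⟨h1j, hjs⟩)]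
      exact Submodule.mem_sup_left hb
    obtain ⟨b₁, hb₁, b₂, hb₂, hbeq⟩ := Submodule.mem_sup.1 hbP
    obtain ⟨c, hc, i, hi, hceq⟩ := Submodule.mem_sup.1 hbI
    have hzero : ∀ m, m ≠ j + 1 → π m b = 0 := by
      intro m hm
      rcases le_or_gt m β with h | h
      · rw [← hbeq, map_add, hπV m (1 + j) (by omega) b₁ hb₁,
          hπhigh m (1 + j + α₁) (by omega) b₂ hb₂, add_zero]
      · rw [← hceq, map_add, hπV m (j + 1) (by omega) c hc,
          LinearMap.mem_ker.1 (hker (Finset.Icc 1 β) m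
            (by simp only [Finset.mem_Icc]; omega) (hUβ hi)), add_zero]
    rw [recon b (j + 1) hzero]
    exact hπmem (j + 1) b
  -- Step C : V (j+1) ≤ sbr (V 1) (V j) when β < j + 1
  have hCge : ∀ j : ℕ, 1 ≤ j → j ≤ s - 1 → β < j + 1 → V (j + 1) ≤ sbr (V 1) (V j) := by
    intro j h1j hjs hβj x hx
    have hxI : x ∈ sbr (V 1) (V j) ⊔ 𝔦 := by
      rw [h𝔦.2.1 j (Finset.mem_Icc.2 ⟨h1j, hjs⟩)]
      exact Submodule.mem_sup_left hx
    obtain ⟨b, hb, i, hi, heq⟩ := Submodule.mem_sup.1 hxI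
    have hiV : i ∈ V (j + 1) := by
      rw [eq_sub_of_add_eq' heq]
      exact sub_mem hx (hBle j h1j hjs hb)
    have hi0 : i = 0 := by
      have h1 : π (j + 1) i = i := hπid (j + 1) i hiV
      have h2 : π (j + 1) i = 0 := LinearMap.mem_ker.1 (hker (Finset.Icc 1 β) (j + 1)
        (by simp only [Finset.mem_Icc]; omega) (hUβ hi))
      rw [h1] at h2
      exact h2
    rw [← heq, hi0, add_zero]
    exact hb
  -- the subalgebra generated by V 1, as sup of iterated brackets
  set W : Submodule ℝ L := ⨆ n ∈ Finset.Icc 1 s, Δpow (V 1) n with hWdef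
  have hDW : ∀ n : ℕ, 1 ≤ n → Δpow (V 1) n ≤ W := by
    intro n hn
    by_cases hns : n ≤ s
    · exact le_iSup₂ (f := fun k (_ : k ∈ Finset.Icc 1 s) => Δpow (V 1) k) n
        (Finset.mem_Icc.2 ⟨hn, hns⟩)
    · rw [hDbot n (by omega)]
      exact bot_le
  have hDsucc : ∀ k : ℕ, Δpow (V 1) (k + 2) = sbr (V 1) (Δpow (V 1) (k + 1)) := fun _ => rfl
  have hbr1 : ∀ v ∈ V 1, ∀ w ∈ W, ⁅v, w⁆ ∈ W := by
    intro v hv w hw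
    have hWc : W ≤ Submodule.comap ((LieAlgebra.ad ℝ L v : L →ₗ[ℝ] L)) W := by
      refine iSup₂_le fun n hn => ?_
      intro x hx
      simp only [Submodule.mem_comap, LieAlgebra.ad_apply]
      have hn1 : 1 ≤ n := (Finset.mem_Icc.1 hn).1
      rcases n with _ | k
      · omega
      · have hx1 : ⁅v, x⁆ ∈ Δpow (V 1) (k + 2) := by
          rw [hDsucc k]
          exact mem_sbr _ _ v hv x hx
        exact hDW (k + 2) (by omega) hx1
    have := hWc hw
    simpa only [Submodule.mem_comap, LieAlgebra.ad_apply] using this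
  have hbrW : ∀ a : ℕ, ∀ c ∈ Δpow (V 1) (a + 1), ∀ w ∈ W, ⁅c, w⁆ ∈ W := by
    intro a
    induction a with
    | zero => exact hbr1
    | succ a ih =>
      intro c hc w hw
      have hc' : c ∈ sbr (V 1) (Δpow (V 1) (a + 1)) := hc
      have key : sbr (V 1) (Δpow (V 1) (a + 1)) ≤
          Submodule.comap ((LieAlgebra.ad ℝ L w : L →ₗ[ℝ] L)) W := by
        refine sbr_le _ _ _ ?_
        intro v hv d hd
        simp only [Submodule.mem_comap, LieAlgebra.ad_apply]
        have h1 : ⁅⁅v, d⁆, w⁆ ∈ W := by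
          rw [lie_lie]
          exact sub_mem (hbr1 v hv _ (ih d hd w hw)) (ih d hd _ (hbr1 v hv w hw))
        rw [← lie_skew]
        exact neg_mem h1
      have := key hc'
      simp only [Submodule.mem_comap, LieAlgebra.ad_apply] at this
      rw [← lie_skew]
      exact neg_mem this
  have hWtop : ∀ x : L, x ∈ W := by
    have hclosed : ∀ x ∈ W, ∀ y ∈ W, ⁅x, y⁆ ∈ W := by
      intro x hx y hy
      have hWc : W ≤ Submodule.comap ((LieAlgebra.ad ℝ L y : L →ₗ[ℝ] L)) W := by
        refine iSup₂_le fun n hn => ?_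
        intro c hc
        simp only [Submodule.mem_comap, LieAlgebra.ad_apply]
        have hn1 : 1 ≤ n := (Finset.mem_Icc.1 hn).1
        rcases n with _ | a
        · omega
        · rw [← lie_skew]
          exact neg_mem (hbrW a c hc y hy)
      have := hWc hx
      simp only [Submodule.mem_comap, LieAlgebra.ad_apply] at this
      rw [← lie_skew]
      exact neg_mem this
    set K : LieSubalgebra ℝ L :=
      { toSubmodule := W, lie_mem' := fun {x y} hx hy => hclosed x hx y hy } with hK
    have hsub : (Δ : Set L) ⊆ (K : Set L) := by
      intro v hv
      exact hDW 1 le_rfl (hΔV1 hv)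
    have hle : LieSubalgebra.lieSpan ℝ L (Δ : Set L) ≤ K := (LieSubalgebra.lieSpan_le).2 hsub
    rw [hbg] at hle
    intro x
    exact hle trivial
  have hDpow_le' : ∀ j : ℕ, 1 ≤ j →
      Δpow (V 1) j ≤ V j ⊔ ⨆ k ∈ Finset.Icc (j + α₁) s, V k := by
    intro j hj
    rcases j with _ | n
    · omega
    · exact hDpow_le n
  -- Step D : V (j+1) ≤ sbr (V 1) (V j) when j + 1 ≤ β
  have hCle : ∀ j : ℕ, 1 ≤ j → j ≤ s - 1 → j + 1 ≤ β → V (j + 1) ≤ sbr (V 1) (V j) := by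
    intro j h1j hjs hjβ x hx
    have hK : W ≤ Submodule.comap (π (j + 1)) (sbr (V 1) (V j)) := by
      refine iSup₂_le fun n hn => ?_
      rcases Finset.mem_Icc.1 hn with ⟨hn1, hns⟩
      by_cases hnj : n = j + 1
      · subst hnj
        have hrw : Δpow (V 1) (j + 1) = sbr (V 1) (Δpow (V 1) j) := by
          obtain ⟨k, rfl⟩ := Nat.exists_eq_succ_of_ne_zero (by omega : j ≠ 0)
          exact hDsucc k
        rw [hrw]
        refine sbr_le _ _ _ ?_
        intro v hv d hd
        simp only [Submodule.mem_comap]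
        obtain ⟨d₁, hd₁, d₂, hd₂, hdeq⟩ := Submodule.mem_sup.1 (hDpow_le' j h1j hd)
        have hsplit : ⁅v, d⁆ = ⁅v, d₁⁆ + ⁅v, d₂⁆ := by rw [← hdeq, lie_add]
        have h1 : ⁅v, d₁⁆ ∈ sbr (V 1) (V j) := mem_sbr _ _ v hv d₁ hd₁
        have h2 : π (j + 1) ⁅v, d₂⁆ = 0 := by
          have hd2l : d₂ ∈ lcs L (j + α₁) := by
            rw [L8 (j + α₁) (by omega)]
            exact hd₂
          have hbrmem : ⁅v, d₂⁆ ∈ lcs L (j + α₁ + 1) := by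
            rw [lcs_succ (j + α₁) (by omega)]
            exact mem_sbr _ _ v Submodule.mem_top d₂ hd2l
          exact hπlcs (j + 1) (j + α₁ + 1) (by omega) (by omega) _ hbrmem
        rw [hsplit, map_add, h2, add_zero, hπid (j + 1) _ (hBle j h1j hjs h1)]
        exact h1
      · intro c hc
        simp only [Submodule.mem_comap]
        obtain ⟨c₁, hc₁, c₂, hc₂, hceq⟩ := Submodule.mem_sup.1 (hDpow_le' n hn1 hc)
        rw [← hceq, map_add, hπV (j + 1) n (fun h => hnj h.symm) c₁ hc₁,
          hπhigh (j + 1) (n + α₁) (by omega) c₂ hc₂, add_zero]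
        exact Submodule.zero_mem _
    have hx' := hK (hWtop x)
    simp only [Submodule.mem_comap] at hx'
    rw [← hπid (j + 1) x hx]
    exact hx'
  -- conclusion : ⊥ is a Carnot quotient ideal, contradiction
  refine hnotCarnot ⟨?_, ?_, ?_, ?_⟩
  · intro x y hy
    rw [Submodule.mem_bot] at hy ⊢
    rw [hy, lie_zero]
  · intro j hj
    rcases Finset.mem_Icc.1 hj with ⟨h1j, hjs⟩
    rw [sup_bot_eq, sup_bot_eq]
    refine le_antisymm (hBle j h1j hjs) ?_
    rcases le_or_gt (j + 1) β with h | h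
    · exact hCle j h1j hjs h
    · exact hCge j h1j hjs h
  · exact hBs
  · rw [sup_bot_eq]
    exact hΔV1
end
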